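/- arXiv:math/0012004 — 6 statements merged into one kernel-verified Lean document; each statement's English description precedes it below -/
import Mathlib

section
/- Let (X,d) be a proper metric space with a family V as in the context, with constants R > r > 0, and assume X is V-coarsely connected. Then for all x, y ∈ X: ρ_V(x,y) ≤ R · μ_V(x,y) and μ_V(x,y) ≤ (4/r) · ρ_V(x,y) + 1. In particular the identity map from (X, μ_V) to (X, ρ_V) is a quasi-isometry. -/
open Metric Finset

/-- `p : Fin (n+1) → X` is a `V`-coarse path: each point lies in the `V`-set of
the previous one. -/
def IsVPath {X : Type*} (V : X → Set X) {n : ℕ} (p : Fin (n + 1) → X) : Prop :=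
  ∀ i : Fin n, p i.succ ∈ V (p i.castSucc)

/-- The path length of a coarse path. -/
noncomputable def pathLength {X : Type*} [MetricSpace X] {n : ℕ} (p : Fin (n + 1) → X) : ℝ :=
  ∑ i : Fin n, dist (p i.castSucc) (p i.succ)

/-- `ρ_V x y`: the infimum of path lengths of `V`-coarse paths from `x` to `y`. -/
noncomputable def rhoV {X : Type*} [MetricSpace X] (V : X → Set X) (x y : X) : ℝ :=
  sInf {L : ℝ | ∃ (n : ℕ) (p : Fin (n + 1) → X),
    p 0 = x ∧ p (Fin.last n) = y ∧ IsVPath V p ∧ pathLength p = L}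

/-- `μ_V x y`: the least word length of a `V`-coarse path from `x` to `y`. -/
noncomputable def muV {X : Type*} (V : X → Set X) (x y : X) : ℕ :=
  sInf {n : ℕ | ∃ p : Fin (n + 1) → X, p 0 = x ∧ p (Fin.last n) = y ∧ IsVPath V p}

lemma muV_le_of_path {X : Type*} (V : X → Set X) {n : ℕ} {x y : X}
    (p : Fin (n + 1) → X) (h0 : p 0 = x) (hl : p (Fin.last n) = y) (hp : IsVPath V p) :
    muV V x y ≤ n :=
  Nat.sInf_le ⟨p, h0, hl, hp⟩

lemma muV_set_nonempty {X : Type*} (V : X → Set X)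
    (hconn : ∀ x y : X, ∃ (n : ℕ) (p : Fin (n + 1) → X),
      p 0 = x ∧ p (Fin.last n) = y ∧ IsVPath V p) (x y : X) :
    {n : ℕ | ∃ p : Fin (n + 1) → X, p 0 = x ∧ p (Fin.last n) = y ∧ IsVPath V p}.Nonempty := by
  obtain ⟨n, p, h0, hl, hp⟩ := hconn x y
  exact ⟨n, p, h0, hl, hp⟩

/-- Prepending one step to an optimal path. -/
lemma muV_prepend {X : Type*} (V : X → Set X)
    (hconn : ∀ x y : X, ∃ (n : ℕ) (p : Fin (n + 1) → X),
      p 0 = x ∧ p (Fin.last n) = y ∧ IsVPath V p)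
    {x y z : X} (hz : z ∈ V x) : muV V x y ≤ muV V z y + 1 := by
  have hmem : muV V z y ∈ {n : ℕ | ∃ p : Fin (n + 1) → X,
      p 0 = z ∧ p (Fin.last n) = y ∧ IsVPath V p} :=
    Nat.sInf_mem (muV_set_nonempty V hconn z y)
  obtain ⟨q, hq0, hql, hq⟩ := hmem
  refine muV_le_of_path V (n := muV V z y + 1) (Fin.cases x q) (by simp) ?_ ?_
  · show Fin.cases x q (Fin.last (muV V z y + 1)) = y
    have hlast : Fin.last (muV V z y + 1) = (Fin.last (muV V z y)).succ := by
      ext; simp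
    rw [hlast, Fin.cases_succ]; exact hql
  · intro i
    induction i using Fin.cases with
    | zero =>
      show Fin.cases x q ((0 : Fin (muV V z y + 1)).succ) ∈
        V (Fin.cases x q ((0 : Fin (muV V z y + 1)).castSucc))
      rw [Fin.castSucc_zero, Fin.cases_succ, Fin.cases_zero, hq0]
      exact hz
    | succ j =>
      show Fin.cases x q (j.succ.succ) ∈ V (Fin.cases x q (j.succ.castSucc))
      rw [← Fin.succ_castSucc, Fin.cases_succ, Fin.cases_succ]
      exact hq j

lemma sum_range_split (f : ℕ → ℝ) (m n : ℕ) :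
    ∑ i ∈ range (m + n), f i = ∑ i ∈ range m, f i + ∑ i ∈ range n, f (m + i) := by
  induction n with
  | zero => simp
  | succ k ih =>
    rw [← Nat.add_assoc, Finset.sum_range_succ, ih, Finset.sum_range_succ, add_assoc]

/-- Key estimate: along any `V`-path, `μ_V` is bounded by `(4/r) · length + 1`. -/
lemma muV_le_of_pathLength {X : Type*} [MetricSpace X] (V : X → Set X) (r : ℝ) (hr : 0 < r)
    (hball : ∀ x, closedBall x r ⊆ V x)
    (hconn : ∀ x y : X, ∃ (n : ℕ) (p : Fin (n + 1) → X),
      p 0 = x ∧ p (Fin.last n) = y ∧ IsVPath V p) :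
    ∀ n : ℕ, ∀ (x y : X) (p : Fin (n + 1) → X), p 0 = x → p (Fin.last n) = y → IsVPath V p →
      (muV V x y : ℝ) ≤ 4 / r * pathLength p + 1 := by
  classical
  intro n
  induction n using Nat.strong_induction_on with
  | _ n IH =>
    intro x y p h0 hl hp
    -- nat-indexed version of the path
    set P : ℕ → X := fun i => p ⟨min i n, by omega⟩ with hP
    have hPp : ∀ i : Fin n, p i.castSucc = P i ∧ p i.succ = P (i + 1) := by
      intro i
      have hi := i.isLt
      constructor
      · apply congrArg
        apply Fin.ext
        show (i : ℕ) = min (i : ℕ) n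
        omega
      · apply congrArg
        apply Fin.ext
        show (i : ℕ) + 1 = min ((i : ℕ) + 1) n
        omega
    set s : ℕ → ℝ := fun k => ∑ i ∈ range k, dist (P i) (P (i + 1)) with hs
    have hlen : pathLength p = s n := by
      show (∑ i : Fin n, dist (p i.castSucc) (p i.succ))
        = ∑ i ∈ range n, dist (P i) (P (i + 1))
      rw [← Fin.sum_univ_eq_sum_range (fun i => dist (P i) (P (i + 1))) n]
      exact Finset.sum_congr rfl fun i _ => by rw [(hPp i).1, (hPp i).2]
    have hlen_nonneg : 0 ≤ pathLength p :=
      Finset.sum_nonneg fun _ _ => dist_nonneg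
    have hdist_le : ∀ k, dist (P 0) (P k) ≤ s k := fun k => dist_le_range_sum_dist P k
    have hP0 : P 0 = x := by
      rw [← h0]
      show p ⟨min 0 n, by omega⟩ = p 0
      exact congrArg p (Fin.ext (by simp))
    have hPn : P n = y := by
      rw [← hl]
      show p ⟨min n n, by omega⟩ = p (Fin.last n)
      exact congrArg p (Fin.ext (by simp))
    by_cases hS : pathLength p ≤ r
    · -- endpoints are close: one step suffices
      have hxy : dist x y ≤ r := by
        calc dist x y = dist (P 0) (P n) := by rw [hP0, hPn]
        _ ≤ s n := hdist_le n
        _ = pathLength p := hlen.symm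
        _ ≤ r := hS
      have h1 : muV V x y ≤ 1 := by
        refine muV_le_of_path V (![x, y]) rfl rfl ?_
        intro i
        fin_cases i
        have hmem : y ∈ closedBall x r := by simpa [dist_comm] using hxy
        simpa using hball x hmem
      have h1' : (muV V x y : ℝ) ≤ 1 := by exact_mod_cast h1
      have h4r : 0 ≤ 4 / r * pathLength p := by positivity
      linarith
    · push_neg at hS
      -- greatest j with prefix length ≤ r
      set j : ℕ := Nat.findGreatest (fun k => s k ≤ r) n with hj
      have hjP : s j ≤ r := by
        rw [hj]
        refine Nat.findGreatest_spec (P := fun k => s k ≤ r) (m := 0) (Nat.zero_le n) ?_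
        show s 0 ≤ r
        have : s 0 = 0 := by simp [hs]
        rw [this]; exact hr.le
      have hjn : j ≤ n := by rw [hj]; exact Nat.findGreatest_le n
      have hjlt : j < n := by
        rcases lt_or_eq_of_le hjn with h | h
        · exact h
        · exfalso; rw [h] at hjP; rw [hlen] at hS; linarith
      have hsj1 : r < s (j + 1) := by
        by_contra h
        push_neg at h
        have hgr : Nat.findGreatest (fun k => s k ≤ r) n < j + 1 := by
          rw [← hj]; omega
        exact Nat.findGreatest_is_greatest hgr (by omega) h
      -- z = P j is one step from x, w = P (j+1) is one step from z
      set z : X := P j with hz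
      set w : X := P (j + 1) with hw
      have hzx : z ∈ V x := by
        refine hball x ?_
        rw [mem_closedBall, dist_comm, ← hP0]
        exact le_trans (hdist_le j) hjP
      have hwz : w ∈ V z := by
        have hstep := hp ⟨j, hjlt⟩
        rwa [(hPp ⟨j, hjlt⟩).1, (hPp ⟨j, hjlt⟩).2] at hstep
      -- tail path from w to y
      set m : ℕ := n - (j + 1) with hmdef
      have hm : j + 1 + m = n := by omega
      set q : Fin (m + 1) → X := fun i => p ⟨j + 1 + i, by have := i.isLt; omega⟩ with hq
      have hqP : ∀ (i : ℕ) (hi : i ≤ m), q ⟨i, by omega⟩ = P (j + 1 + i) := by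
        intro i hi
        show p _ = p _
        apply congrArg
        apply Fin.ext
        show j + 1 + i = min (j + 1 + i) n
        omega
      have hq0 : q 0 = w := by
        have h00 := hqP 0 (Nat.zero_le m)
        rw [hw]
        convert h00 using 2
        exact Fin.ext (by simp)
      have hql : q (Fin.last m) = y := by
        have hmm := hqP m le_rfl
        rw [show (Fin.last m) = (⟨m, by omega⟩ : Fin (m + 1)) from rfl, hmm, hm, hPn]
      have hcs : ∀ i : Fin m, q i.castSucc = P (j + 1 + i) ∧ q i.succ = P (j + 1 + i + 1) := by
        intro i
        have hi := i.isLt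
        constructor
        · have h1 := hqP i (by omega)
          rw [← h1]
          apply congrArg
          exact Fin.ext rfl
        · have h2 := hqP (i + 1) (by omega)
          rw [show j + 1 + ((i : ℕ) + 1) = j + 1 + i + 1 by omega] at h2
          rw [← h2]
          apply congrArg
          exact Fin.ext rfl
      have hqpath : IsVPath V q := by
        intro i
        have hi := i.isLt
        rw [(hcs i).1, (hcs i).2]
        have hstep := hp ⟨j + 1 + i, by omega⟩
        rwa [(hPp ⟨j + 1 + i, by omega⟩).1, (hPp ⟨j + 1 + i, by omega⟩).2] at hstep
      have e1 : pathLength q = ∑ i ∈ range m, dist (P (j + 1 + i)) (P (j + 1 + i + 1)) := by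
        show (∑ i : Fin m, dist (q i.castSucc) (q i.succ)) = _
        rw [← Fin.sum_univ_eq_sum_range (fun i => dist (P (j + 1 + i)) (P (j + 1 + i + 1))) m]
        exact Finset.sum_congr rfl fun i _ => by rw [(hcs i).1, (hcs i).2]
      have hqlen : pathLength p = s (j + 1) + pathLength q := by
        rw [hlen, ← hm, e1]
        show (∑ i ∈ range (j + 1 + m), dist (P i) (P (i + 1))) = _
        rw [sum_range_split (fun i => dist (P i) (P (i + 1))) (j + 1) m]
      -- induction hypothesis on the tail
      have hIH : (muV V w y : ℝ) ≤ 4 / r * pathLength q + 1 :=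
        IH m (by omega) w y q hq0 hql hqpath
      have hmu1 : muV V x y ≤ muV V z y + 1 := muV_prepend V hconn hzx
      have hmu2 : muV V z y ≤ muV V w y + 1 := muV_prepend V hconn hwz
      have hmu : (muV V x y : ℝ) ≤ (muV V w y : ℝ) + 2 := by
        have hle : muV V x y ≤ muV V w y + 2 := by omega
        exact_mod_cast hle
      have hc : 0 < 4 / r := by positivity
      have key : 4 / r * pathLength q + 3 ≤ 4 / r * pathLength p + 1 := by
        have h1 : pathLength q = pathLength p - s (j + 1) := by linarith [hqlen]
        have h2 : 4 / r * pathLength q ≤ 4 / r * (pathLength p - r) := by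
          apply mul_le_mul_of_nonneg_left _ hc.le
          linarith
        have h3 : 4 / r * (pathLength p - r) = 4 / r * pathLength p - 4 := by
          field_simp
          try ring
        linarith
      linarith

theorem statement1
    {X : Type*} [MetricSpace X] [ProperSpace X]
    (V : X → Set X) (R r : ℝ) (hr : 0 < r) (hrR : r < R)
    (hcompact : ∀ x, IsCompact (V x))
    (hnhds : ∀ x, V x ∈ nhds x)
    (hsymm : ∀ x y, x ∈ V y ↔ y ∈ V x)
    (hball : ∀ x, closedBall x r ⊆ V x ∧ V x ⊆ closedBall x R)
    (hconn : ∀ x y : X, ∃ (n : ℕ) (p : Fin (n + 1) → X),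
      p 0 = x ∧ p (Fin.last n) = y ∧ IsVPath V p) :
    ∀ x y : X,
      rhoV V x y ≤ R * (muV V x y : ℝ) ∧
      (muV V x y : ℝ) ≤ (4 / r) * rhoV V x y + 1 := by
  intro x y
  have hRpos : 0 < R := lt_trans hr hrR
  constructor
  · -- rho ≤ R * mu : take an optimal path for mu
    obtain ⟨p, h0, hl, hp⟩ := Nat.sInf_mem (muV_set_nonempty V hconn x y)
    set n := muV V x y with hn
    have hplen : pathLength p ≤ R * n := by
      rw [pathLength]
      calc ∑ i : Fin n, dist (p i.castSucc) (p i.succ)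
          ≤ ∑ _i : Fin n, R := by
            refine Finset.sum_le_sum fun i _ => ?_
            have := (hball (p i.castSucc)).2 (hp i)
            rw [mem_closedBall] at this
            rwa [dist_comm]
        _ = R * n := by simp [mul_comm]
    have hmem : pathLength p ∈ {L : ℝ | ∃ (k : ℕ) (q : Fin (k + 1) → X),
        q 0 = x ∧ q (Fin.last k) = y ∧ IsVPath V q ∧ pathLength q = L} :=
      ⟨n, p, h0, hl, hp, rfl⟩
    have hbdd : BddBelow {L : ℝ | ∃ (k : ℕ) (q : Fin (k + 1) → X),
        q 0 = x ∧ q (Fin.last k) = y ∧ IsVPath V q ∧ pathLength q = L} := by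
      refine ⟨0, fun L hL => ?_⟩
      obtain ⟨k, q, _, _, _, hq⟩ := hL
      rw [← hq]
      exact Finset.sum_nonneg fun _ _ => dist_nonneg
    exact le_trans (csInf_le hbdd hmem) hplen
  · -- mu ≤ (4/r) * rho + 1
    have hlb : ∀ L ∈ {L : ℝ | ∃ (k : ℕ) (q : Fin (k + 1) → X),
        q 0 = x ∧ q (Fin.last k) = y ∧ IsVPath V q ∧ pathLength q = L},
        ((muV V x y : ℝ) - 1) * (r / 4) ≤ L := by
      intro L hL
      obtain ⟨k, q, h0, hl, hq, hqL⟩ := hL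
      have hmu := muV_le_of_pathLength V r hr (fun x => (hball x).1) hconn k x y q h0 hl hq
      rw [hqL] at hmu
      have h1 : (muV V x y : ℝ) - 1 ≤ 4 / r * L := by linarith
      have h2 := mul_le_mul_of_nonneg_right h1 (le_of_lt (by positivity : (0 : ℝ) < r / 4))
      have heq : 4 / r * L * (r / 4) = L := by field_simp; try ring
      linarith
    have hne : {L : ℝ | ∃ (k : ℕ) (q : Fin (k + 1) → X),
        q 0 = x ∧ q (Fin.last k) = y ∧ IsVPath V q ∧ pathLength q = L}.Nonempty := by
      obtain ⟨n, p, h0, hl, hp⟩ := hconn x y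
      exact ⟨pathLength p, n, p, h0, hl, hp, rfl⟩
    have hrho : ((muV V x y : ℝ) - 1) * (r / 4) ≤ rhoV V x y := le_csInf hne hlb
    have h2 := mul_le_mul_of_nonneg_right hrho (le_of_lt (by positivity : (0 : ℝ) < 4 / r))
    have heq : ((muV V x y : ℝ) - 1) * (r / 4) * (4 / r) = (muV V x y : ℝ) - 1 := by
      field_simp; try ring
    have hcomm : rhoV V x y * (4 / r) = 4 / r * rhoV V x y := mul_comm _ _
    linarith
end

section
/- Let Γ be a locally compact Hausdorff topological group and let G ≤ Γ be a closed subgroup which is cocompact, i.e. there is a compact set K ⊆ Γ with G·K = Γ. Then Γ is compactly generated if and only if G is compactly generated. -/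
open Pointwise

/-- `S` generates the group `G`: every element is a finite product of elements
of `S ∪ S⁻¹`. -/
def GeneratesGroup {G : Type*} [Group G] (S : Set G) : Prop :=
  ∀ g : G, ∃ (n : ℕ) (f : Fin n → G), (∀ i, f i ∈ S ∪ S⁻¹) ∧ (List.ofFn f).prod = g

/-- A topological group is compactly generated if some compact subset generates it. -/
def CompactlyGeneratedGroup (G : Type*) [Group G] [TopologicalSpace G] : Prop :=
  ∃ S : Set G, IsCompact S ∧ GeneratesGroup S

lemma generatesGroup_iff_closure_eq_top {G : Type*} [Group G] (S : Set G) :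
    GeneratesGroup S ↔ Subgroup.closure S = ⊤ := by
  constructor
  · intro h
    rw [eq_top_iff]
    intro g _
    obtain ⟨n, f, hf, hprod⟩ := h g
    rw [← hprod]
    refine Subgroup.list_prod_mem _ fun x hx => ?_
    obtain ⟨i, rfl⟩ := List.mem_ofFn.mp hx
    rcases hf i with h' | h'
    · exact Subgroup.subset_closure h'
    · exact (Subgroup.closure S).inv_mem_iff.mp (Subgroup.subset_closure (Set.mem_inv.mp h'))
  · intro h g
    have hg : g ∈ Submonoid.closure (S ∪ S⁻¹) := by
      rw [← Subgroup.closure_toSubmonoid, h]; trivial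
    obtain ⟨l, hl, hprod⟩ := Submonoid.exists_list_of_mem_closure hg
    exact ⟨l.length, l.get, fun i => hl _ (l.get_mem ..), by rw [List.ofFn_get, hprod]⟩

theorem statement4
    {Γ : Type*} [Group Γ] [TopologicalSpace Γ] [IsTopologicalGroup Γ]
    [LocallyCompactSpace Γ] [T2Space Γ]
    (G : Subgroup Γ) (hclosed : IsClosed (G : Set Γ))
    (hcocompact : ∃ K : Set Γ, IsCompact K ∧ ∀ γ : Γ, ∃ g ∈ G, ∃ k ∈ K, γ = g * k) :
    CompactlyGeneratedGroup Γ ↔ CompactlyGeneratedGroup G := by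
  obtain ⟨K, hKc, hK⟩ := hcocompact
  -- replace K by K' = insert 1 K
  set K' : Set Γ := insert 1 K with hK'def
  have hK'c : IsCompact K' := hKc.insert 1
  have hK' : ∀ γ : Γ, ∃ g ∈ G, ∃ k ∈ K', γ = g * k := fun γ => by
    obtain ⟨g, hg, k, hk, h⟩ := hK γ
    exact ⟨g, hg, k, Set.mem_insert_of_mem _ hk, h⟩
  have h1K' : (1 : Γ) ∈ K' := Set.mem_insert _ _
  constructor
  · -- Γ compactly generated → G compactly generated
    rintro ⟨S, hSc, hSgen⟩
    rw [generatesGroup_iff_closure_eq_top] at hSgen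
    set T : Set Γ := insert 1 (S ∪ S⁻¹) with hTdef
    have hTc : IsCompact T := ((hSc.union hSc.inv).insert 1)
    have h1T : (1 : Γ) ∈ T := Set.mem_insert _ _
    set L : Set Γ := (G : Set Γ) ∩ (K' * T * K'⁻¹) with hLdef
    have hLc : IsCompact L :=
      ((hK'c.mul hTc).mul hK'c.inv).inter_left hclosed
    have hLsub : L ⊆ (G : Set Γ) := Set.inter_subset_left
    set L' : Set G := Subtype.val ⁻¹' L with hL'def
    have hL'c : IsCompact L' := by
      rw [Topology.IsEmbedding.subtypeVal.isCompact_iff]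
      have : Subtype.val '' L' = L := by
        apply Set.image_preimage_eq_of_subset
        simpa using hLsub
      rw [this]; exact hLc
    refine ⟨L', hL'c, ?_⟩
    rw [generatesGroup_iff_closure_eq_top, eq_top_iff]
    -- key claim: products of elements of S ∪ S⁻¹, decomposed as g * k, have g ∈ closure L
    have key : ∀ l : List Γ, (∀ y ∈ l, y ∈ S ∪ S⁻¹) →
        ∀ g ∈ G, ∀ k ∈ K', l.prod = g * k → g ∈ Subgroup.closure L := by
      intro l
      induction l using List.reverseRecOn with
      | nil =>
        intro _ g hg k hk hprod
        apply Subgroup.subset_closure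
        refine ⟨hg, ?_⟩
        have : g = 1 * 1 * k⁻¹ := by
          simp only [List.prod_nil] at hprod
          rw [one_mul]
          exact eq_mul_inv_of_mul_eq hprod.symm
        rw [this]
        exact Set.mul_mem_mul (Set.mul_mem_mul h1K' h1T) (Set.inv_mem_inv.mpr hk)
      | append_singleton l s ih =>
        intro hmem g hg k hk hprod
        rw [List.prod_append, List.prod_singleton] at hprod
        obtain ⟨g', hg', k', hk', hdec⟩ := hK' l.prod
        have hg'cl : g' ∈ Subgroup.closure L :=
          ih (fun y hy => hmem y (List.mem_append_left _ hy)) g' hg' k' hk' hdec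
        have hquot : g'⁻¹ * g ∈ L := by
          refine ⟨G.mul_mem (G.inv_mem hg') hg, ?_⟩
          have : g'⁻¹ * g = k' * s * k⁻¹ := by
            have hgk : g = l.prod * s * k⁻¹ := eq_mul_inv_of_mul_eq hprod.symm
            rw [hgk, hdec]
            group
          rw [this]
          exact Set.mul_mem_mul
            (Set.mul_mem_mul hk' (Set.mem_insert_of_mem _ (hmem s (List.mem_append_right _ (List.mem_singleton_self s)))))
            (Set.inv_mem_inv.mpr hk)
        have : g = g' * (g'⁻¹ * g) := by group
        rw [this]
        exact Subgroup.mul_mem _ hg'cl (Subgroup.subset_closure hquot)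
    intro g _
    have hgmem : (g : Γ) ∈ Subgroup.closure L := by
      have hg : (g : Γ) ∈ Subgroup.closure S := by rw [hSgen]; trivial
      have : (g : Γ) ∈ Submonoid.closure (S ∪ S⁻¹) := by
        rw [← Subgroup.closure_toSubmonoid]; exact hg
      obtain ⟨l, hl, hprod⟩ := Submonoid.exists_list_of_mem_closure this
      exact key l hl g g.2 1 h1K' (by rw [hprod, mul_one])
    -- transport membership through the subtype inclusion
    have himg : Subtype.val '' L' = L :=
      Set.image_preimage_eq_of_subset (by simpa using hLsub)
    have hmap : (Subgroup.closure L').map G.subtype = Subgroup.closure L := by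
      rw [MonoidHom.map_closure]
      exact congrArg Subgroup.closure (by simpa [Subgroup.coe_subtype] using himg)
    have : (g : Γ) ∈ (Subgroup.closure L').map G.subtype := by rw [hmap]; exact hgmem
    obtain ⟨x, hx, hxg⟩ := this
    have hxg' : x = g := Subtype.ext hxg
    rwa [← hxg']
  · -- G compactly generated → Γ compactly generated
    rintro ⟨S, hSc, hSgen⟩
    rw [generatesGroup_iff_closure_eq_top] at hSgen
    refine ⟨Subtype.val '' S ∪ K', (hSc.image continuous_subtype_val).union hK'c, ?_⟩
    rw [generatesGroup_iff_closure_eq_top, eq_top_iff]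
    intro γ _
    obtain ⟨g, hg, k, hk, rfl⟩ := hK' γ
    refine Subgroup.mul_mem _ ?_ (Subgroup.subset_closure (Or.inr hk))
    have : (⟨g, hg⟩ : G) ∈ Subgroup.closure S := by rw [hSgen]; trivial
    have hmem : g ∈ (Subgroup.closure S).map G.subtype := ⟨⟨g, hg⟩, this, rfl⟩
    rw [MonoidHom.map_closure] at hmem
    refine Subgroup.closure_mono ?_ hmem
    intro x hx
    exact Or.inl (by simpa [Subgroup.coe_subtype] using hx)
end

section
/- Let Γ be a locally compact Hausdorff topological group and let G ≤ Γ be a closed cocompact subgroup (there is a compact K ⊆ Γ with G·K = Γ), and suppose G and Γ have compact generating sets S and A respectively. Then the inclusion G → Γ is a quasi-isometry for the associated word metrics: there exist constants L ≥ 1 and C ≥ 0 such that (1/L)·ℓ_A(g⁻¹h) − C ≤ ℓ_S(g⁻¹h) ≤ L·ℓ_A(g⁻¹h) + C for all g, h ∈ G, and for every γ ∈ Γ there exists g ∈ G with ℓ_A(g⁻¹γ) ≤ C. -/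
open Pointwise

/-- The word length of `g` with respect to a generating set `S`: the least `n`
such that `g` is a product of `n` elements of `S ∪ S⁻¹`. -/
noncomputable def wordLength {G : Type*} [Group G] (S : Set G) (g : G) : ℕ :=
  sInf {n : ℕ | ∃ f : Fin n → G, (∀ i, f i ∈ S ∪ S⁻¹) ∧ (List.ofFn f).prod = g}

section helpers
variable {G : Type*} [Group G] {S : Set G}

lemma wordLength_le_list (S : Set G) (l : List G) (h : ∀ x ∈ l, x ∈ S ∪ S⁻¹) :
    wordLength S l.prod ≤ l.length := by
  apply Nat.sInf_le
  exact ⟨l.get, fun i => h _ (List.get_mem l i), by rw [List.ofFn_get]⟩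

lemma exists_list (hgen : GeneratesGroup S) (g : G) :
    ∃ l : List G, l.length = wordLength S g ∧ (∀ x ∈ l, x ∈ S ∪ S⁻¹) ∧ l.prod = g := by
  have hne : {n : ℕ | ∃ f : Fin n → G, (∀ i, f i ∈ S ∪ S⁻¹) ∧ (List.ofFn f).prod = g}.Nonempty := by
    obtain ⟨n, f, hf, hp⟩ := hgen g
    exact ⟨n, f, hf, hp⟩
  obtain ⟨f, hf, hp⟩ := Nat.sInf_mem hne
  refine ⟨List.ofFn f, by simp [wordLength], ?_, hp⟩
  intro x hx
  rw [List.mem_ofFn] at hx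
  obtain ⟨i, rfl⟩ := hx
  exact hf i

lemma wordLength_one_le : wordLength S (1 : G) ≤ 0 := by
  simpa using wordLength_le_list S [] (by simp)

lemma wordLength_mul_le (hgen : GeneratesGroup S) (g h : G) :
    wordLength S (g * h) ≤ wordLength S g + wordLength S h := by
  obtain ⟨l₁, hl₁, hm₁, hp₁⟩ := exists_list hgen g
  obtain ⟨l₂, hl₂, hm₂, hp₂⟩ := exists_list hgen h
  have := wordLength_le_list S (l₁ ++ l₂) (by
    intro x hx; rcases List.mem_append.1 hx with h | h
    · exact hm₁ x h
    · exact hm₂ x h)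
  simpa [hp₁, hp₂, hl₁, hl₂] using this

lemma wordLength_inv_le (hgen : GeneratesGroup S) (g : G) :
    wordLength S g⁻¹ ≤ wordLength S g := by
  obtain ⟨l, hl, hm, hp⟩ := exists_list hgen g
  have := wordLength_le_list S ((l.map fun x => x⁻¹).reverse) (by
    intro x hx
    simp only [List.mem_reverse, List.mem_map] at hx
    obtain ⟨y, hy, rfl⟩ := hx
    rcases hm y hy with h | h
    · exact Or.inr (by simpa using h)
    · exact Or.inl (by simpa using h))
  rw [← List.prod_inv_reverse, hp] at this
  simpa [hl] using this

lemma wordLength_le_one_of_mem (hg : g ∈ S ∪ S⁻¹) : wordLength S g ≤ 1 := by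
  simpa using wordLength_le_list S [g] (by simpa)

lemma list_prod_mem_pow (s : Set G) : ∀ l : List G, (∀ x ∈ l, x ∈ s) → l.prod ∈ s ^ l.length
  | [], _ => by simp [Set.mem_one]
  | a :: l, h => by
    rw [List.prod_cons, List.length_cons, pow_succ']
    exact Set.mul_mem_mul (h a (by simp)) (list_prod_mem_pow s l fun x hx => h x (by simp [hx]))

lemma exists_list_of_mem_pow {s : Set G} :
    ∀ n (g : G), g ∈ s ^ n → ∃ l : List G, l.length = n ∧ (∀ x ∈ l, x ∈ s) ∧ l.prod = g
  | 0, g, hg => ⟨[], by simp, by simp, by simpa [Set.mem_one] using hg.symm⟩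
  | n + 1, g, hg => by
    rw [pow_succ'] at hg
    obtain ⟨a, ha, b, hb, rfl⟩ := hg
    obtain ⟨l, hl, hm, hp⟩ := exists_list_of_mem_pow n b hb
    refine ⟨a :: l, by simp [hl], ?_, by simp [hp]⟩
    intro x hx
    rcases List.mem_cons.1 hx with rfl | hx
    exacts [ha, hm x hx]

lemma wordLength_list_prod_le (hgen : GeneratesGroup S) :
    ∀ l : List G, (∀ x ∈ l, x ∈ S ∪ S⁻¹ ∪ {1}) → wordLength S l.prod ≤ l.length := by
  intro l hm
  induction l with
  | nil => simpa using wordLength_one_le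
  | cons a l ih =>
    rw [List.prod_cons, List.length_cons]
    calc wordLength S (a * l.prod) ≤ wordLength S a + wordLength S l.prod :=
          wordLength_mul_le hgen _ _
      _ ≤ 1 + l.length := by
          gcongr
          · rcases hm a (by simp) with h | h
            · exact wordLength_le_one_of_mem h
            · simp only [Set.mem_singleton_iff] at h; subst h
              exact le_trans wordLength_one_le (by norm_num)
          · exact ih fun x hx => hm x (by simp [hx])
      _ = l.length + 1 := by omega

lemma wordLength_le_of_mem_pow (hgen : GeneratesGroup S) {n : ℕ} {g : G}
    (hg : g ∈ (S ∪ S⁻¹ ∪ {1}) ^ n) : wordLength S g ≤ n := by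
  obtain ⟨l, hl, hm, hp⟩ := exists_list_of_mem_pow n g hg
  rw [← hp, ← hl]
  exact wordLength_list_prod_le hgen l hm

lemma mem_pow_of_wordLength_le (hgen : GeneratesGroup S) {n : ℕ} {g : G}
    (hg : wordLength S g ≤ n) : g ∈ (S ∪ S⁻¹ ∪ {1}) ^ n := by
  obtain ⟨l, hl, hm, hp⟩ := exists_list hgen g
  have : g = (l ++ List.replicate (n - l.length) 1).prod := by
    simp [hp, List.prod_replicate]
  have hlen : (l ++ List.replicate (n - l.length) 1).length = n := by
    simp; omega
  have hmem := list_prod_mem_pow (S ∪ S⁻¹ ∪ {1}) (l ++ List.replicate (n - l.length) 1) (by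
    intro x hx
    rcases List.mem_append.1 hx with h | h
    · exact Or.inl (hm x h)
    · exact Or.inr (by simpa using List.eq_of_mem_replicate h))
  rw [hlen] at hmem
  rwa [this]

end helpers

section topo
variable {Γ : Type*} [Group Γ] [TopologicalSpace Γ] [IsTopologicalGroup Γ]
  [LocallyCompactSpace Γ] [T2Space Γ]

lemma bounded_wordLength (A : Set Γ) (hA : IsCompact A) (hgen : GeneratesGroup A)
    (K : Set Γ) (hK : IsCompact K) : ∃ N : ℕ, ∀ k ∈ K, wordLength A k ≤ N := by
  set B := A ∪ A⁻¹ ∪ ({1} : Set Γ) with hB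
  have hBcomp : IsCompact B := (hA.union hA.inv).union isCompact_singleton
  have hBpow : ∀ n, IsCompact (B ^ n) := by
    intro n
    induction n with
    | zero => rw [pow_zero, ← Set.singleton_one]; exact isCompact_singleton
    | succ n ih => rw [pow_succ]; exact ih.mul hBcomp
  have hcover : ⋃ n, B ^ n = Set.univ := by
    apply Set.eq_univ_of_forall
    intro g
    exact Set.mem_iUnion.2 ⟨wordLength A g, mem_pow_of_wordLength_le hgen le_rfl⟩
  obtain ⟨n, x, hx⟩ := nonempty_interior_of_iUnion_of_closed
    (fun n => (hBpow n).isClosed) hcover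
  set U : Set Γ := (fun y => x * y) ⁻¹' interior (B ^ n) with hU
  have hUopen : IsOpen U := isOpen_interior.preimage (continuous_mul_left x)
  have hU1 : (1 : Γ) ∈ U := by simpa [hU] using hx
  have hUlen : ∀ u ∈ U, wordLength A u ≤ 2 * n := by
    intro u hu
    have hxu : x * u ∈ B ^ n := interior_subset hu
    have hxB : x ∈ B ^ n := interior_subset hx
    have h1 : wordLength A (x * u) ≤ n := wordLength_le_of_mem_pow hgen hxu
    have h2 : wordLength A x ≤ n := wordLength_le_of_mem_pow hgen hxB
    calc wordLength A u = wordLength A (x⁻¹ * (x * u)) := by group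
      _ ≤ wordLength A x⁻¹ + wordLength A (x * u) := wordLength_mul_le hgen _ _
      _ ≤ n + n := add_le_add (le_trans (wordLength_inv_le hgen x) h2) h1
      _ = 2 * n := by omega
  obtain ⟨t, htK, hcov⟩ := hK.elim_nhds_subcover (fun k => k • U) (fun k _ =>
    ((hUopen.smul k).mem_nhds ⟨1, hU1, by simp⟩))
  refine ⟨t.sup (fun k => wordLength A k) + 2 * n, ?_⟩
  intro k hk
  obtain ⟨γ, hγt, hkγ⟩ := Set.mem_iUnion₂.1 (hcov hk)
  obtain ⟨u, hu, rfl⟩ := hkγ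
  calc wordLength A (γ • u) = wordLength A (γ * u) := rfl
    _ ≤ wordLength A γ + wordLength A u := wordLength_mul_le hgen _ _
    _ ≤ t.sup (fun k => wordLength A k) + 2 * n :=
        add_le_add (Finset.le_sup hγt) (hUlen u hu)

end topo

theorem statement5
    {Γ : Type*} [Group Γ] [TopologicalSpace Γ] [IsTopologicalGroup Γ]
    [LocallyCompactSpace Γ] [T2Space Γ]
    (G : Subgroup Γ) (hclosed : IsClosed (G : Set Γ))
    (hcocompact : ∃ K : Set Γ, IsCompact K ∧ ∀ γ : Γ, ∃ g ∈ G, ∃ k ∈ K, γ = g * k)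
    (S : Set G) (hS : IsCompact S) (hSgen : GeneratesGroup S)
    (A : Set Γ) (hA : IsCompact A) (hAgen : GeneratesGroup A) :
    ∃ L : ℝ, 1 ≤ L ∧ ∃ C : ℝ, 0 ≤ C ∧
      (∀ g h : G,
        (1 / L) * (wordLength A ((g : Γ)⁻¹ * (h : Γ)) : ℝ) - C ≤ (wordLength S (g⁻¹ * h) : ℝ) ∧
        (wordLength S (g⁻¹ * h) : ℝ) ≤ L * (wordLength A ((g : Γ)⁻¹ * (h : Γ)) : ℝ) + C) ∧
      (∀ γ : Γ, ∃ g : G, (wordLength A ((g : Γ)⁻¹ * γ) : ℝ) ≤ C) := by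
  classical
  obtain ⟨K, hKcomp, hKco⟩ := hcocompact
  haveI : LocallyCompactSpace G := hclosed.locallyCompactSpace
  set K' : Set Γ := insert (1 : Γ) K with hK'def
  have hK'comp : IsCompact K' := hKcomp.insert 1
  have hK'co : ∀ γ : Γ, ∃ g ∈ G, ∃ k ∈ K', γ = g * k := by
    intro γ
    obtain ⟨g, hg, k, hk, e⟩ := hKco γ
    exact ⟨g, hg, k, Set.mem_insert_of_mem _ hk, e⟩
  have h1K' : (1 : Γ) ∈ K' := Set.mem_insert _ _
  set B : Set Γ := A ∪ A⁻¹ ∪ {1} with hBdef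
  have h1B : (1 : Γ) ∈ B := Or.inr rfl
  have hBcomp : IsCompact B := (hA.union hA.inv).union isCompact_singleton
  set Cset : Set Γ := K' * B * K'⁻¹ with hCdef
  have hCcomp : IsCompact Cset := (hK'comp.mul hBcomp).mul hK'comp.inv
  set T : Set G := Subtype.val ⁻¹' Cset with hTdef
  have hTcomp : IsCompact T := by
    rw [Topology.IsEmbedding.subtypeVal.isCompact_iff]
    have himg : Subtype.val '' T = Cset ∩ (G : Set Γ) := by
      ext x
      constructor
      · rintro ⟨y, hy, rfl⟩; exact ⟨hy, y.2⟩
      · rintro ⟨hx, hxG⟩; exact ⟨⟨x, hxG⟩, hx, rfl⟩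
    rw [himg]
    exact hCcomp.inter_right hclosed
  obtain ⟨N, hN⟩ := bounded_wordLength S hS hSgen T hTcomp
  set SΓ : Set Γ := Subtype.val '' S with hSΓdef
  have hSΓcomp : IsCompact (SΓ ∪ SΓ⁻¹) :=
    (hS.image continuous_subtype_val).union (hS.image continuous_subtype_val).inv
  obtain ⟨M, hM⟩ := bounded_wordLength A hA hAgen _ hSΓcomp
  obtain ⟨P, hP⟩ := bounded_wordLength A hA hAgen K' hK'comp
  -- key induction for the upper bound
  have key : ∀ l : List Γ, (∀ x ∈ l, x ∈ A ∪ A⁻¹) → ∀ k ∈ K',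
      ∃ g : G, ∃ k' ∈ K', k * l.prod = ↑g * k' ∧ wordLength S g ≤ N * l.length := by
    intro l
    induction l with
    | nil =>
      intro _ k hk
      exact ⟨1, k, hk, by simp, by simpa using wordLength_one_le⟩
    | cons a l ih =>
      intro hm k hk
      obtain ⟨g₁, hg₁G, k₁, hk₁, he⟩ := hK'co (k * a)
      obtain ⟨g₂, k', hk', he₂, hw₂⟩ := ih (fun x hx => hm x (by simp [hx])) k₁ hk₁
      refine ⟨⟨g₁, hg₁G⟩ * g₂, k', hk', ?_, ?_⟩
      · have h1 : k * (a :: l).prod = g₁ * (k₁ * l.prod) := by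
          rw [List.prod_cons, ← mul_assoc, he, mul_assoc]
        rw [h1, he₂, Subgroup.coe_mul, mul_assoc]
      · have hg₁T : (⟨g₁, hg₁G⟩ : G) ∈ T := by
          have hg₁eq : g₁ = k * a * k₁⁻¹ := by rw [he]; group
          show g₁ ∈ Cset
          rw [hg₁eq]
          exact Set.mul_mem_mul (Set.mul_mem_mul hk (Or.inl (hm a (by simp))))
            (Set.inv_mem_inv.2 hk₁)
        calc wordLength S (⟨g₁, hg₁G⟩ * g₂)
            ≤ wordLength S ⟨g₁, hg₁G⟩ + wordLength S g₂ := wordLength_mul_le hSgen _ _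
          _ ≤ N + N * l.length := add_le_add (hN _ hg₁T) hw₂
          _ = N * (a :: l).length := by rw [List.length_cons]; ring
  have upper : ∀ g : G, wordLength S g ≤ N * wordLength A (↑g : Γ) + N := by
    intro g
    obtain ⟨l, hl, hm, hp⟩ := exists_list hAgen (↑g : Γ)
    obtain ⟨g', k', hk', he, hw⟩ := key l hm 1 h1K'
    rw [one_mul, hp] at he
    have hk'eq : ((g'⁻¹ * g : G) : Γ) = k' := by push_cast; rw [he]; group
    have hmemT : g'⁻¹ * g ∈ T := by
      show ((g'⁻¹ * g : G) : Γ) ∈ Cset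
      rw [hk'eq]
      have : k' = k' * 1 * (1 : Γ)⁻¹ := by group
      rw [this]
      exact Set.mul_mem_mul (Set.mul_mem_mul hk' h1B) (Set.inv_mem_inv.2 h1K')
    calc wordLength S g = wordLength S (g' * (g'⁻¹ * g)) := by rw [mul_inv_cancel_left]
      _ ≤ wordLength S g' + wordLength S (g'⁻¹ * g) := wordLength_mul_le hSgen _ _
      _ ≤ N * l.length + N := add_le_add hw (hN _ hmemT)
      _ = N * wordLength A (↑g : Γ) + N := by rw [hl]
  have wl_list : ∀ l : List Γ, (∀ x ∈ l, wordLength A x ≤ M) →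
      wordLength A l.prod ≤ M * l.length := by
    intro l hm
    induction l with
    | nil => simpa using wordLength_one_le
    | cons a l ih =>
      rw [List.prod_cons, List.length_cons]
      calc wordLength A (a * l.prod) ≤ wordLength A a + wordLength A l.prod :=
            wordLength_mul_le hAgen _ _
        _ ≤ M + M * l.length := add_le_add (hm a (by simp)) (ih fun x hx => hm x (by simp [hx]))
        _ = M * (l.length + 1) := by ring
  have lower : ∀ g : G, wordLength A (↑g : Γ) ≤ M * wordLength S g := by
    intro g
    obtain ⟨l, hl, hm, hp⟩ := exists_list hSgen g
    have hprod : (l.map (Subtype.val : G → Γ)).prod = (↑g : Γ) := by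
      rw [← hp]
      exact (map_list_prod (G.subtype) l).symm
    have := wl_list (l.map Subtype.val) (by
      intro x hx
      rcases List.mem_map.1 hx with ⟨s, hs, rfl⟩
      apply hM
      rcases hm s hs with h | h
      · exact Or.inl ⟨s, h, rfl⟩
      · refine Or.inr ?_
        rw [Set.mem_inv]
        exact ⟨s⁻¹, h, by push_cast; ring⟩)
    rw [hprod] at this
    simpa [hl] using this
  -- assemble the constants
  refine ⟨max (max (M : ℝ) N) 1, le_max_right _ _, max (N : ℝ) P,
    le_trans (Nat.cast_nonneg N) (le_max_left _ _), ?_, ?_⟩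
  · intro g h
    set L : ℝ := max (max (M : ℝ) N) 1
    set C : ℝ := max (N : ℝ) P
    have hLpos : (0 : ℝ) < L := lt_of_lt_of_le one_pos (le_max_right _ _)
    have hcoe : ((g⁻¹ * h : G) : Γ) = (g : Γ)⁻¹ * (h : Γ) := by push_cast; ring
    set a : ℕ := wordLength A ((g : Γ)⁻¹ * (h : Γ)) with hadef
    set s : ℕ := wordLength S (g⁻¹ * h) with hsdef
    have hup : (s : ℝ) ≤ N * a + N := by
      have := upper (g⁻¹ * h)
      rw [hcoe] at this
      exact_mod_cast this
    have hlo : (a : ℝ) ≤ M * s := by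
      have := lower (g⁻¹ * h)
      rw [hcoe] at this
      exact_mod_cast this
    have hNL : (N : ℝ) ≤ L := le_trans (le_max_right _ _) (le_max_left _ _)
    have hML : (M : ℝ) ≤ L := le_trans (le_max_left _ _) (le_max_left _ _)
    have hNC : (N : ℝ) ≤ C := le_max_left _ _
    have ha0 : (0 : ℝ) ≤ a := Nat.cast_nonneg a
    have hs0 : (0 : ℝ) ≤ s := Nat.cast_nonneg s
    constructor
    · have h1 : (a : ℝ) ≤ L * s := le_trans hlo (by nlinarith)
      have h2 : (1 / L) * a ≤ s := by
        rw [one_div, inv_mul_le_iff₀ hLpos]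
        exact h1
      have hC0 : (0 : ℝ) ≤ C := le_trans (Nat.cast_nonneg N) hNC
      linarith
    · nlinarith
  · intro γ
    obtain ⟨g, hg, k, hk, e⟩ := hKco γ
    refine ⟨⟨g, hg⟩, ?_⟩
    have : ((⟨g, hg⟩ : G) : Γ)⁻¹ * γ = k := by rw [e]; group
    rw [this]
    calc (wordLength A k : ℝ) ≤ P := by exact_mod_cast hP k (Set.mem_insert_of_mem _ hk)
      _ ≤ max (N : ℝ) P := le_max_right _ _
end

section
/- Let T be a bounded valence, bushy tree and let (g_i) be a sequence in Aut(T). (a) If (g_i) converges pointwise on vertices to an automorphism of T, then (g_i) satisfies coarse convergence: there is D ≥ 0 so that for every vertex v there is n with diam{g_i(v) : i ≥ n} ≤ D. (b) Conversely, if (g_i) satisfies coarse convergence then some subsequence of (g_i) converges pointwise on vertices to an automorphism of T. -/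
/-- `w` is a branch vertex: deleting `w` leaves at least three infinite
connected components. -/
def BranchVertex {V : Type*} (G : SimpleGraph V) (w : V) : Prop :=
  ∃ c₁ c₂ c₃ : (G.induce {u : V | u ≠ w}).ConnectedComponent,
    c₁ ≠ c₂ ∧ c₁ ≠ c₃ ∧ c₂ ≠ c₃ ∧
    c₁.supp.Infinite ∧ c₂.supp.Infinite ∧ c₃.supp.Infinite

/-- A graph is bushy if every vertex is uniformly close to a branch vertex. -/
def Bushy {V : Type*} (G : SimpleGraph V) : Prop :=
  ∃ A : ℕ, ∀ v : V, ∃ w : V, G.dist v w ≤ A ∧ BranchVertex G w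

/-- A graph has bounded valence if vertex degrees are uniformly bounded. -/
def BoundedValence {V : Type*} (G : SimpleGraph V) : Prop :=
  ∃ C : ℕ, ∀ v : V, (G.neighborSet v).Finite ∧ (G.neighborSet v).ncard ≤ C

/-- Coarse convergence of a sequence of automorphisms. -/
def CoarseConvergence {V : Type*} (G : SimpleGraph V) (g : ℕ → (G ≃g G)) : Prop :=
  ∃ D : ℕ, ∀ v : V, ∃ n : ℕ, ∀ i ≥ n, ∀ j ≥ n, G.dist (g i v) (g j v) ≤ D


open Filter Set

section Aux

variable {V : Type*} {G : SimpleGraph V}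

private lemma dist_le_of_iso (hconn : G.Connected) (f : G ≃g G) (u v : V) :
    G.dist (f u) (f v) ≤ G.dist u v := by
  obtain ⟨p, hp⟩ := (hconn u v).exists_walk_length_eq_dist
  calc G.dist (f u) (f v) ≤ (p.map f.toHom).length := SimpleGraph.dist_le _
    _ = p.length := by simp
    _ = G.dist u v := hp

private lemma dist_iso (hconn : G.Connected) (f : G ≃g G) (u v : V) :
    G.dist (f u) (f v) = G.dist u v := by
  refine le_antisymm (dist_le_of_iso hconn f u v) ?_
  have := dist_le_of_iso hconn f.symm (f u) (f v)
  simpa using this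

private lemma ball_finite (hconn : G.Connected)
    (hlf : ∀ v : V, (G.neighborSet v).Finite) (o : V) :
    ∀ n : ℕ, {v : V | G.dist o v ≤ n}.Finite := by
  intro n
  induction n with
  | zero =>
    refine Set.Finite.subset (Set.finite_singleton o) ?_
    intro v hv
    have : G.dist o v = 0 := Nat.le_zero.mp hv
    simp [((hconn o v).dist_eq_zero_iff).mp this]
  | succ n ih =>
    refine Set.Finite.subset (ih.union (ih.biUnion fun w _ => hlf w)) ?_
    intro v hv
    obtain ⟨p, hp⟩ := (hconn v o).exists_walk_length_eq_dist
    cases p with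
    | nil =>
      left
      simp [SimpleGraph.dist_self]
    | @cons _ w _ hadj q =>
      right
      have hq : G.dist o w ≤ n := by
        have h1 : G.dist w o ≤ q.length := SimpleGraph.dist_le q
        have h2 : q.length + 1 = G.dist v o := by simpa using hp
        have h3 : G.dist v o ≤ n + 1 := by rwa [SimpleGraph.dist_comm]
        rw [SimpleGraph.dist_comm]
        omega
      exact Set.mem_biUnion hq hadj.symm

private lemma countable_of_connected (hconn : G.Connected)
    (hlf : ∀ v : V, (G.neighborSet v).Finite) : Countable V := by
  rcases isEmpty_or_nonempty V with hV | hV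
  · infer_instance
  · obtain ⟨o⟩ := hV
    have : (Set.univ : Set V).Countable := by
      have : (Set.univ : Set V) ⊆ ⋃ n : ℕ, {v : V | G.dist o v ≤ n} := by
        intro v _
        exact Set.mem_iUnion.mpr ⟨G.dist o v, by simp⟩
      exact Set.Countable.mono this
        (Set.countable_iUnion fun n => (ball_finite hconn hlf o n).countable)
    exact Set.countable_univ_iff.mp this

end Aux

theorem statement10 {V : Type*} (G : SimpleGraph V)
    (htree : G.IsTree) (hbv : BoundedValence G) (hbushy : Bushy G)
    (g : ℕ → (G ≃g G)) :
    -- (a) pointwise convergence implies coarse convergence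
    ((∃ h : G ≃g G, ∀ v : V, ∃ N : ℕ, ∀ i ≥ N, g i v = h v) →
      CoarseConvergence G g) ∧
    -- (b) coarse convergence yields a pointwise convergent subsequence
    (CoarseConvergence G g →
      ∃ φ : ℕ → ℕ, StrictMono φ ∧
        ∃ h : G ≃g G, ∀ v : V, ∃ N : ℕ, ∀ i ≥ N, g (φ i) v = h v) := by
  have hconn : G.Connected := htree.isConnected
  obtain ⟨C, hC⟩ := hbv
  have hlf : ∀ v : V, (G.neighborSet v).Finite := fun v => (hC v).1
  constructor
  · rintro ⟨h, hh⟩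
    refine ⟨0, fun v => ?_⟩
    obtain ⟨N, hN⟩ := hh v
    refine ⟨N, fun i hi j hj => ?_⟩
    rw [hN i hi, hN j hj]
    simp [SimpleGraph.dist_self]
  · rintro ⟨D, hD⟩
    rcases isEmpty_or_nonempty V with hV | hV
    · exact ⟨id, strictMono_id, SimpleGraph.Iso.refl, fun v => isEmptyElim v⟩
    haveI : Countable V := countable_of_connected hconn hlf
    set U : Ultrafilter ℕ := Filter.hyperfilter ℕ with hUdef
    have infU : ∀ S : Set ℕ, S ∈ U → S.Infinite := by
      intro S hS
      by_contra hfin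
      exact Filter.notMem_hyperfilter_of_finite (Set.not_infinite.mp hfin) hS
    have tail_mem : ∀ n : ℕ, {i : ℕ | n ≤ i} ∈ U := by
      intro n
      have : {i : ℕ | n ≤ i} = (Set.Iio n)ᶜ := by ext i; simp [not_lt]
      rw [this]
      exact Filter.compl_mem_hyperfilter_of_finite (Set.finite_Iio n)
    -- limit values
    have hlim : ∀ v : V, ∃ x : V, {i : ℕ | g i v = x} ∈ U := by
      intro v
      obtain ⟨n, hn⟩ := hD v
      have hSfin : {w : V | G.dist (g n v) w ≤ D}.Finite := ball_finite hconn hlf _ D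
      have hsub : {i : ℕ | n ≤ i} ⊆
          ⋃ x ∈ {w : V | G.dist (g n v) w ≤ D}, {i : ℕ | g i v = x} := by
        intro i hi
        exact Set.mem_biUnion (hn n le_rfl i hi) rfl
      have hU : (⋃ x ∈ {w : V | G.dist (g n v) w ≤ D}, {i : ℕ | g i v = x}) ∈ U :=
        Filter.mem_of_superset (tail_mem n) hsub
      obtain ⟨x, _, hx⟩ := (Ultrafilter.finite_biUnion_mem_iff hSfin).mp hU
      exact ⟨x, hx⟩
    choose h₀ hA using hlim
    -- injective
    have hinj : Function.Injective h₀ := by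
      intro v w hvw
      obtain ⟨i, hiv, hiw⟩ := Ultrafilter.nonempty_of_mem (Filter.inter_mem (hA v) (hA w))
      have : g i v = g i w := by
        rw [Set.mem_setOf_eq.mp hiv, Set.mem_setOf_eq.mp hiw, hvw]
      exact (g i).injective this
    -- adjacency
    have hadj : ∀ v w : V, G.Adj (h₀ v) (h₀ w) ↔ G.Adj v w := by
      intro v w
      obtain ⟨i, hiv, hiw⟩ := Ultrafilter.nonempty_of_mem (Filter.inter_mem (hA v) (hA w))
      rw [← Set.mem_setOf_eq.mp hiv, ← Set.mem_setOf_eq.mp hiw]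
      exact (g i).map_adj_iff
    -- surjective
    have hsurj : Function.Surjective h₀ := by
      intro u
      set r := G.dist u (h₀ u) with hr
      have hball : ∀ i ∈ {i : ℕ | g i u = h₀ u}, (g i).symm u ∈ {w : V | G.dist u w ≤ r} := by
        intro i hi
        have h1 : G.dist (g i ((g i).symm u)) (g i u) = G.dist ((g i).symm u) u :=
          dist_iso hconn (g i) _ _
        have h2 : g i ((g i).symm u) = u := (g i).apply_symm_apply u
        rw [h2, Set.mem_setOf_eq.mp hi] at h1
        simp only [Set.mem_setOf_eq]
        rw [SimpleGraph.dist_comm, ← h1, hr]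
      have hsub : {i : ℕ | g i u = h₀ u} ⊆
          ⋃ x ∈ {w : V | G.dist u w ≤ r}, {i : ℕ | g i u = h₀ u ∧ (g i).symm u = x} := by
        intro i hi
        exact Set.mem_biUnion (hball i hi) ⟨hi, rfl⟩
      have hU : (⋃ x ∈ {w : V | G.dist u w ≤ r},
          {i : ℕ | g i u = h₀ u ∧ (g i).symm u = x}) ∈ U :=
        Filter.mem_of_superset (hA u) hsub
      obtain ⟨v, _, hv⟩ :=
        (Ultrafilter.finite_biUnion_mem_iff (ball_finite hconn hlf u r)).mp hU
      obtain ⟨i, hi1, hi2⟩ := Ultrafilter.nonempty_of_mem (Filter.inter_mem hv (hA v))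
      refine ⟨v, ?_⟩
      have hgu : (g i).symm u = v := hi1.2
      have : g i v = u := by rw [← hgu]; exact (g i).apply_symm_apply u
      rw [← Set.mem_setOf_eq.mp hi2, this]
    -- the limit isomorphism
    let h : G ≃g G := ⟨Equiv.ofBijective h₀ ⟨hinj, hsurj⟩, fun {a b} => hadj a b⟩
    -- enumerate vertices
    obtain ⟨e, he⟩ := exists_surjective_nat V
    set Bset : ℕ → Set ℕ := fun n => {i : ℕ | ∀ k ≤ n, g i (e k) = h₀ (e k)} with hBdef
    have hB : ∀ n, Bset n ∈ U := by
      intro n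
      have heq : Bset n = ⋂ k ∈ Set.Iic n, {i : ℕ | g i (e k) = h₀ (e k)} := by
        ext i; simp [hBdef]
      rw [heq]
      exact (Filter.biInter_mem (Set.finite_Iic n)).mpr fun k _ => hA (e k)
    have hstep : ∀ n m : ℕ, ∃ i, i ∈ Bset n ∧ m < i := by
      intro n m
      obtain ⟨i, hi⟩ := ((infU _ (hB n)).diff (Set.finite_Iic m)).nonempty
      exact ⟨i, hi.1, not_le.mp hi.2⟩
    choose F hF1 hF2 using hstep
    set φ : ℕ → ℕ := fun n => Nat.rec (F 0 0) (fun n ih => F (n + 1) ih) n with hφdef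
    have hφmem : ∀ n, φ n ∈ Bset n := by
      intro n
      cases n with
      | zero => exact hF1 0 0
      | succ n => exact hF1 (n + 1) (φ n)
    have hφmono : StrictMono φ := by
      apply strictMono_nat_of_lt_succ
      intro n
      exact hF2 (n + 1) (φ n)
    refine ⟨φ, hφmono, h, fun v => ?_⟩
    obtain ⟨k, hk⟩ := he v
    refine ⟨k, fun i hi => ?_⟩
    have := hφmem i (k := k) (le_of_eq rfl |>.trans hi)
    rw [← hk]
    calc g (φ i) (e k) = h₀ (e k) := hφmem i k hi
      _ = h (e k) := rfl
end

section
/- Let T be a locally finite tree on which some group G acts by graph automorphisms with finitely many orbits of vertices. Then exactly one of the following holds: (i) T is bounded, i.e. has finite diameter; (ii) T is line-like: there exist a bi-infinite geodesic line L in T and a constant A ≥ 0 such that every vertex of T is within distance A of L; (iii) T is bushy: there is a constant A ≥ 0 such that every vertex of T is within distance A of a vertex v for which T minus v has at least three infinite connected components. -/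
/-- A graph is bounded (has finite diameter). -/
def BoundedGraph {V : Type*} (G : SimpleGraph V) : Prop :=
  ∃ D : ℕ, ∀ u v : V, G.dist u v ≤ D

/-- A graph is line-like: there is a bi-infinite geodesic line from which every
vertex has uniformly bounded distance. -/
def LineLike {V : Type*} (G : SimpleGraph V) : Prop :=
  ∃ L : ℤ → V, (∀ m n : ℤ, G.dist (L m) (L n) = (m - n).natAbs) ∧
    ∃ A : ℕ, ∀ v : V, ∃ n : ℤ, G.dist v (L n) ≤ A

open SimpleGraph

namespace Statement11Aux

variable {V : Type*} {T : SimpleGraph V}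

lemma path_length_eq_dist (ht : T.IsTree) {x y : V} (p : T.Walk x y) (hp : p.IsPath) :
    T.dist x y = p.length := by
  obtain ⟨q, hq, hql⟩ := ht.isConnected.exists_path_of_dist x y
  have h := ht.IsAcyclic.path_unique ⟨q, hq⟩ ⟨p, hp⟩
  rw [← hql]
  have : q = p := congrArg Subtype.val h
  rw [this]

lemma dist_split (ht : T.IsTree) {x y v : V} (p : T.Walk x y) (hp : p.IsPath)
    (hv : v ∈ p.support) : T.dist x y = T.dist x v + T.dist v y := by
  classical
  have h1 := path_length_eq_dist ht (p.takeUntil v hv) (hp.takeUntil hv)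
  have h2 := path_length_eq_dist ht (p.dropUntil v hv) (hp.dropUntil hv)
  have h3 := path_length_eq_dist ht p hp
  have h4 : (p.takeUntil v hv).append (p.dropUntil v hv) = p := p.take_spec hv
  have h5 : (p.takeUntil v hv).length + (p.dropUntil v hv).length = p.length := by
    rw [← Walk.length_append, h4]
  omega

lemma dist_pos_of_ne (ht : T.IsTree) {x y : V} (h : x ≠ y) : 0 < T.dist x y :=
  ht.isConnected.pos_dist_of_ne h

lemma eq_of_dist_eq_zero (ht : T.IsTree) {x y : V} (h : T.dist x y = 0) : x = y :=
  (ht.isConnected.dist_eq_zero_iff).mp h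

/-- step toward: there is a neighbor of `y` one step closer to `x`. -/
lemma exists_step (ht : T.IsTree) {x y : V} {k : ℕ} (h : T.dist x y = k + 1) :
    ∃ u, T.Adj y u ∧ T.dist x u = k := by
  obtain ⟨p, hpl⟩ := ht.isConnected.exists_walk_length_eq_dist x y
  have hne : y ≠ x := by rintro rfl; rw [SimpleGraph.dist_self] at h; omega
  obtain ⟨u, ha, q, hq⟩ := Walk.exists_eq_cons_of_ne hne p.reverse
  refine ⟨u, ha, ?_⟩
  have hql : q.length = k := by
    have := p.length_reverse
    rw [hq] at this; simp [Walk.length_cons] at this; omega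
  have h1 : T.dist u x ≤ k := by
    have := SimpleGraph.dist_le q; omega
  have h2 : T.dist x y ≤ T.dist x u + T.dist u y := ht.isConnected.dist_triangle
  have h3 : T.dist u y = 1 := by
    rw [SimpleGraph.dist_eq_one_iff_adj]; exact ha.symm
  rw [SimpleGraph.dist_comm] at h1
  omega


/-- The side of the (oriented) edge pair `(w,u)`: vertices strictly closer to `u`. -/
def side (T : SimpleGraph V) (w u : V) : Set V := {x | T.dist x u < T.dist x w}

lemma dichotomy (ht : T.IsTree) {z w : V} (h : T.Adj z w) (x : V) :
    T.dist x z + 1 = T.dist x w ∨ T.dist x w + 1 = T.dist x z := by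
  classical
  obtain ⟨p, hp, hpl⟩ := ht.isConnected.exists_path_of_dist x z
  by_cases hw : w ∈ p.support
  · right
    have := dist_split ht p hp hw
    have hdz : T.dist w z = 1 := by rw [SimpleGraph.dist_eq_one_iff_adj]; exact h.symm
    omega
  · left
    have hq : (p.concat h).IsPath := by
      rw [← Walk.isPath_reverse_iff]
      rw [Walk.reverse_concat]
      exact ((Walk.isPath_reverse_iff p).mpr hp).cons (by simpa using hw)
    have := path_length_eq_dist ht (p.concat h) hq
    rw [Walk.length_concat] at this
    omega

lemma mem_side_iff (ht : T.IsTree) {z w : V} (h : T.Adj z w) {x : V} :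
    x ∈ side T w z ↔ T.dist x z + 1 = T.dist x w := by
  rcases dichotomy ht h x with hd | hd <;> constructor <;> intro hx <;>
    simp only [side, Set.mem_setOf_eq] at * <;> omega

lemma side_compl (ht : T.IsTree) {z w : V} (h : T.Adj z w) {x : V} :
    x ∈ side T w z ↔ x ∉ side T z w := by
  rcases dichotomy ht h x with hd | hd <;>
    simp only [side, Set.mem_setOf_eq] <;> omega

lemma self_mem_side (ht : T.IsTree) {w u : V} (h : T.Adj w u) : u ∈ side T w u := by
  have h0 : T.dist u u = 0 := SimpleGraph.dist_self
  have h1 : 0 < T.dist u w := dist_pos_of_ne ht h.ne'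
  simp only [side, Set.mem_setOf_eq]
  omega

lemma not_mem_side_self {w u : V} : w ∉ side T w u := by
  intro h
  simp only [side, Set.mem_setOf_eq] at h
  have h0 : T.dist w w = 0 := SimpleGraph.dist_self
  omega

/-- Crossing lemma: an edge from the `z`-side to the `w`-side must be `(z,w)` itself. -/
lemma crossing (ht : T.IsTree) {z w x₁ x₂ : V} (hzw : T.Adj z w) (h12 : T.Adj x₁ x₂)
    (h1 : x₁ ∈ side T w z) (h2 : x₂ ∈ side T z w) : x₂ = w := by
  classical
  rw [mem_side_iff ht hzw] at h1
  rw [mem_side_iff ht hzw.symm] at h2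
  set t := T.dist x₁ z with hts
  -- basic triangle computations
  have e1 : T.dist x₁ w ≤ 1 + T.dist x₂ w := by
    have := ht.isConnected.dist_triangle (u := x₁) (v := x₂) (w := w)
    have : T.dist x₁ x₂ = 1 := by rw [SimpleGraph.dist_eq_one_iff_adj]; exact h12
    have := ht.isConnected.dist_triangle (u := x₁) (v := x₂) (w := w)
    omega
  have e2 : T.dist x₂ z ≤ 1 + T.dist x₁ z := by
    have h' : T.dist x₂ x₁ = 1 := by rw [SimpleGraph.dist_eq_one_iff_adj]; exact h12.symm
    have := ht.isConnected.dist_triangle (u := x₂) (v := x₁) (w := z)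
    omega
  have ht2 : T.dist x₂ w = t := by omega
  -- unique path from x₂ to w
  obtain ⟨p, hp, hpl⟩ := ht.isConnected.exists_path_of_dist x₂ w
  have hq : (Walk.cons h12 p).IsPath := by
    apply Walk.isPath_of_length_eq_dist
    rw [Walk.length_cons]
    omega
  -- path from x₁ to z, concat edge
  obtain ⟨r, hr, hrl⟩ := ht.isConnected.exists_path_of_dist x₁ z
  have hwr : w ∉ r.support := by
    intro hw
    have := dist_split ht r hr hw
    have hdz : T.dist w z = 1 := by rw [SimpleGraph.dist_eq_one_iff_adj]; exact hzw.symm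
    omega
  have hr' : (r.concat hzw).IsPath := by
    rw [← Walk.isPath_reverse_iff, Walk.reverse_concat]
    exact ((Walk.isPath_reverse_iff r).mpr hr).cons (by simpa using hwr)
  have huniq := ht.IsAcyclic.path_unique ⟨Walk.cons h12 p, hq⟩ ⟨r.concat hzw, hr'⟩
  have hx2 : x₂ ∈ (r.concat hzw).support := by
    have : x₂ ∈ (Walk.cons h12 p).support := by
      rw [Walk.support_cons]; exact List.mem_cons_of_mem _ p.start_mem_support
    have huniq' : Walk.cons h12 p = r.concat hzw := congrArg Subtype.val huniq
    rwa [huniq'] at this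
  rw [Walk.support_concat, List.mem_append, List.mem_singleton] at hx2
  rcases hx2 with hx2 | hx2
  · exfalso
    have := dist_split ht r hr hx2
    have h21 : T.dist x₁ x₂ = 1 := by rw [SimpleGraph.dist_eq_one_iff_adj]; exact h12
    omega
  · exact hx2

/-- Any walk from the `z`-side to the `w`-side passes through `w`. -/
lemma walk_crossing (ht : T.IsTree) {z w y p : V} (hzw : T.Adj z w)
    (hy : y ∈ side T w z) (hp : p ∈ side T z w) (q : T.Walk y p) : w ∈ q.support := by
  induction q with
  | nil => exact ((side_compl ht hzw).mp hy hp).elim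
  | cons h q ih =>
    rename_i a b _
    by_cases hb : b ∈ side T w z
    · rw [Walk.support_cons]; exact List.mem_cons_of_mem _ (ih hb hp)
    · have hb' : b ∈ side T z w := by
        by_contra hc; exact hb ((side_compl ht hzw).mpr hc)
      have hbw := crossing ht hzw h hy hb'
      subst hbw
      rw [Walk.support_cons]
      exact List.mem_cons_of_mem _ q.start_mem_support


/-- Additivity of distance across a separating edge. -/
lemma dist_add_of_sides (ht : T.IsTree) {z w y p : V} (hzw : T.Adj z w)
    (hy : y ∈ side T w z) (hp : p ∈ side T z w) :
    T.dist y p = T.dist y w + T.dist w p := by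
  classical
  obtain ⟨q, hq, hql⟩ := ht.isConnected.exists_path_of_dist y p
  exact dist_split ht q hq (walk_crossing ht hzw hy hp q)

/-- Sides at `w` over distinct neighbours are disjoint. -/
lemma side_eq_of_mem (ht : T.IsTree) {w u u' x : V} (hu : T.Adj w u) (hu' : T.Adj w u')
    (hx : x ∈ side T w u) (hx' : x ∈ side T w u') : u = u' := by
  classical
  by_cases hcase : u' ∈ side T w u
  · rw [mem_side_iff ht hu.symm] at hcase
    have h2 : T.dist u' w = 1 := by rw [SimpleGraph.dist_eq_one_iff_adj]; exact hu'.symm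
    have h3 : T.dist u' u = 0 := by omega
    exact (eq_of_dist_eq_zero ht h3).symm
  exfalso
  have hu'side : u' ∈ side T u w := (side_compl ht hu).mpr hcase
  -- path from x to u' avoids w
  obtain ⟨q, hq, hql⟩ := ht.isConnected.exists_path_of_dist x u'
  have hwq : w ∉ q.support := by
    intro hw
    have := dist_split ht q hq hw
    rw [mem_side_iff ht hu'.symm] at hx'
    have h2 : T.dist w u' = 1 := by rw [SimpleGraph.dist_eq_one_iff_adj]; exact hu'
    omega
  exact hwq (walk_crossing ht hu.symm hx hu'side q)

/-- Every vertex other than `w` is on the side of some neighbour of `w`. -/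
lemma exists_side (ht : T.IsTree) {w x : V} (h : x ≠ w) :
    ∃ u, T.Adj w u ∧ x ∈ side T w u := by
  have hd : T.dist x w ≠ 0 := by
    intro h0; exact h (eq_of_dist_eq_zero ht h0)
  obtain ⟨k, hk⟩ : ∃ k, T.dist x w = k + 1 := ⟨T.dist x w - 1, by omega⟩
  obtain ⟨u, hu, hud⟩ := exists_step ht hk
  refine ⟨u, hu, ?_⟩
  simp only [side, Set.mem_setOf_eq]
  omega

/-- Nesting of sides along a path. -/
lemma side_nested (ht : T.IsTree) {w u z : V} (hwu : T.Adj w u) (huz : T.Adj u z)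
    (hzw : z ≠ w) : side T u z ⊆ side T w u := by
  intro y hy
  by_contra hc
  have hy' : y ∈ side T u w := by
    by_contra hc2
    exact hc ((side_compl ht hwu.symm).mpr hc2)
  exact hzw (side_eq_of_mem ht huz hwu.symm hy hy')


section Components

/-- From a walk in `T` avoiding `w`, get reachability in the induced graph. -/
lemma reach_of_walk_avoid {w : V} {a b : V} (p : T.Walk a b) (hw : w ∉ p.support)
    (ha : a ≠ w) (hb : b ≠ w) :
    (T.induce {x : V | x ≠ w}).Reachable ⟨a, ha⟩ ⟨b, hb⟩ := by
  induction p with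
  | nil => exact Reachable.refl _
  | cons h q ih =>
    rename_i c d e
    have hd : d ≠ w := by
      intro hdw; subst hdw
      exact hw (by rw [Walk.support_cons]; exact List.mem_cons_of_mem _ q.start_mem_support)
    have hq : w ∉ q.support := fun hwq =>
      hw (by rw [Walk.support_cons]; exact List.mem_cons_of_mem _ hwq)
    refine Reachable.trans ?_ (ih hq hd hb)
    exact SimpleGraph.Adj.reachable (by simpa using h)

/-- From reachability in the induced graph, get a walk in `T` avoiding `w`. -/
lemma walk_of_reach {w : V} {a b : {x : V | x ≠ w}}
    (h : (T.induce {x : V | x ≠ w}).Reachable a b) :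
    ∃ p : T.Walk a.1 b.1, w ∉ p.support := by
  obtain ⟨q⟩ := h
  refine ⟨q.map (SimpleGraph.Embedding.induce {x : V | x ≠ w}).toHom, ?_⟩
  intro hmem
  have hmem' : w ∈ q.support.map (SimpleGraph.Embedding.induce (G := T) {x : V | x ≠ w}).toHom := by
    rw [← Walk.support_map]; exact hmem
  obtain ⟨⟨y, hy⟩, _, hyw⟩ := List.mem_map.mp hmem'
  exact hy hyw

lemma supp_eq_side (ht : T.IsTree) {w u : V} (hu : T.Adj w u) :
    Subtype.val '' ((T.induce {x : V | x ≠ w}).connectedComponentMk ⟨u, hu.ne'⟩).supp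
      = side T w u := by
  classical
  ext y
  constructor
  · rintro ⟨⟨y', hy'⟩, hmem, rfl⟩
    rw [ConnectedComponent.mem_supp_iff, ConnectedComponent.eq] at hmem
    obtain ⟨p, hwp⟩ := walk_of_reach hmem
    by_contra hc
    have hyside : y' ∈ side T u w := (side_compl ht hu).mpr hc
    exact hwp (walk_crossing ht hu.symm (self_mem_side ht hu) hyside p.reverse
      |> fun hws => by rwa [Walk.support_reverse, List.mem_reverse] at hws)
  · intro hy
    have hyw : y ≠ w := fun h => by subst h; exact not_mem_side_self hy
    obtain ⟨p, hp, hpl⟩ := ht.isConnected.exists_path_of_dist y u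
    have hwp : w ∉ p.support := by
      intro hw
      have := dist_split ht p hp hw
      rw [mem_side_iff ht hu.symm] at hy
      have h2 : T.dist w u = 1 := by rw [SimpleGraph.dist_eq_one_iff_adj]; exact hu
      omega
    have hr := reach_of_walk_avoid p hwp hyw hu.ne'
    refine ⟨⟨y, hyw⟩, ?_, rfl⟩
    rw [ConnectedComponent.mem_supp_iff, ConnectedComponent.eq]
    exact hr

lemma compMk_eq_of_mem_side (ht : T.IsTree) {w u y : V} (hu : T.Adj w u)
    (hy : y ∈ side T w u) (hyw : y ≠ w) :
    (T.induce {x : V | x ≠ w}).connectedComponentMk ⟨y, hyw⟩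
      = (T.induce {x : V | x ≠ w}).connectedComponentMk ⟨u, hu.ne'⟩ := by
  have := (supp_eq_side ht hu).symm.subset hy
  obtain ⟨⟨y', hy'⟩, hmem, h⟩ := this
  cases h
  rwa [ConnectedComponent.mem_supp_iff] at hmem

/-- Branch vertices are exactly vertices with three distinct neighbours with
infinite sides. -/
lemma branchVertex_iff (ht : T.IsTree) {w : V} :
    BranchVertex T w ↔ ∃ u₁ u₂ u₃ : V, u₁ ≠ u₂ ∧ u₁ ≠ u₃ ∧ u₂ ≠ u₃ ∧
      T.Adj w u₁ ∧ T.Adj w u₂ ∧ T.Adj w u₃ ∧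
      (side T w u₁).Infinite ∧ (side T w u₂).Infinite ∧ (side T w u₃).Infinite := by
  constructor
  · rintro ⟨c₁, c₂, c₃, h12, h13, h23, hi1, hi2, hi3⟩
    have key : ∀ c : (T.induce {x : V | x ≠ w}).ConnectedComponent, c.supp.Infinite →
        ∃ u, ∃ hu : T.Adj w u, (side T w u).Infinite ∧
          c = (T.induce {x : V | x ≠ w}).connectedComponentMk ⟨u, hu.ne'⟩ := by
      intro c hc
      obtain ⟨⟨x, hx⟩, hmem⟩ := hc.nonempty
      obtain ⟨u, hu, hxu⟩ := exists_side ht hx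
      rw [ConnectedComponent.mem_supp_iff] at hmem
      have hceq : c = (T.induce {x : V | x ≠ w}).connectedComponentMk ⟨u, hu.ne'⟩ := by
        rw [← hmem]; exact compMk_eq_of_mem_side ht hu hxu hx
      refine ⟨u, hu, ?_, hceq⟩
      rw [← supp_eq_side ht hu, ← hceq]
      exact Set.Infinite.image (fun a _ b _ h => Subtype.ext h) hc
    obtain ⟨u₁, hu1, hi1', hc1⟩ := key c₁ hi1
    obtain ⟨u₂, hu2, hi2', hc2⟩ := key c₂ hi2
    obtain ⟨u₃, hu3, hi3', hc3⟩ := key c₃ hi3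
    refine ⟨u₁, u₂, u₃, ?_, ?_, ?_, hu1, hu2, hu3, hi1', hi2', hi3'⟩ <;>
      rintro rfl
    · exact h12 (by rw [hc1, hc2])
    · exact h13 (by rw [hc1, hc3])
    · exact h23 (by rw [hc2, hc3])
  · rintro ⟨u₁, u₂, u₃, h12, h13, h23, hu1, hu2, hu3, hi1, hi2, hi3⟩
    refine ⟨(T.induce {x : V | x ≠ w}).connectedComponentMk ⟨u₁, hu1.ne'⟩,
      (T.induce {x : V | x ≠ w}).connectedComponentMk ⟨u₂, hu2.ne'⟩,
      (T.induce {x : V | x ≠ w}).connectedComponentMk ⟨u₃, hu3.ne'⟩, ?_, ?_, ?_, ?_, ?_, ?_⟩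
    · intro h
      have : (u₂ : V) ∈ side T w u₁ := by
        rw [← supp_eq_side ht hu1]
        exact ⟨⟨u₂, hu2.ne'⟩, by rw [ConnectedComponent.mem_supp_iff, h], rfl⟩
      exact h12 (side_eq_of_mem ht hu1 hu2 this (self_mem_side ht hu2))
    · intro h
      have : (u₃ : V) ∈ side T w u₁ := by
        rw [← supp_eq_side ht hu1]
        exact ⟨⟨u₃, hu3.ne'⟩, by rw [ConnectedComponent.mem_supp_iff, h], rfl⟩
      exact h13 (side_eq_of_mem ht hu1 hu3 this (self_mem_side ht hu3))
    · intro h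
      have : (u₃ : V) ∈ side T w u₂ := by
        rw [← supp_eq_side ht hu2]
        exact ⟨⟨u₃, hu3.ne'⟩, by rw [ConnectedComponent.mem_supp_iff, h], rfl⟩
      exact h23 (side_eq_of_mem ht hu2 hu3 this (self_mem_side ht hu3))
    · exact Set.Infinite.of_image _ (by rw [supp_eq_side ht hu1]; exact hi1)
    · exact Set.Infinite.of_image _ (by rw [supp_eq_side ht hu2]; exact hi2)
    · exact Set.Infinite.of_image _ (by rw [supp_eq_side ht hu3]; exact hi3)

end Components

section LocFin

variable (hlf : ∀ v : V, (T.neighborSet v).Finite)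

lemma ball_finite (ht : T.IsTree) (hlf : ∀ v : V, (T.neighborSet v).Finite) (v₀ : V) :
    ∀ n : ℕ, {x : V | T.dist v₀ x ≤ n}.Finite := by
  intro n
  induction n with
  | zero =>
    apply Set.Finite.subset (Set.finite_singleton v₀)
    intro x hx
    simp only [Set.mem_setOf_eq, Nat.le_zero] at hx
    exact eq_of_dist_eq_zero ht (by rw [SimpleGraph.dist_comm]; exact hx)
  | succ n ih =>
    have hsub : {x : V | T.dist v₀ x ≤ n + 1} ⊆
        {x : V | T.dist v₀ x ≤ n} ∪ ⋃ u ∈ {x : V | T.dist v₀ x ≤ n}, T.neighborSet u := by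
      intro x hx
      simp only [Set.mem_setOf_eq] at hx
      by_cases hle : T.dist v₀ x ≤ n
      · exact Or.inl hle
      · have hd : T.dist v₀ x = n + 1 := by omega
        obtain ⟨u, hu, hud⟩ := exists_step ht hd
        right
        refine Set.mem_biUnion (show u ∈ {x : V | T.dist v₀ x ≤ n} by simpa using hud.le) ?_
        exact hu.symm
    exact Set.Finite.subset (ih.union (ih.biUnion fun u _ => hlf u)) hsub

lemma exists_infinite_side (ht : T.IsTree) (hlf : ∀ v : V, (T.neighborSet v).Finite)
    [Infinite V] (w : V) : ∃ u, T.Adj w u ∧ (side T w u).Infinite := by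
  by_contra hc
  push_neg at hc
  have hfin : (⋃ u ∈ T.neighborSet w, side T w u).Finite :=
    (hlf w).biUnion fun u hu => hc u hu
  have hsub : {x : V | x ≠ w} ⊆ ⋃ u ∈ T.neighborSet w, side T w u := by
    intro x hx
    obtain ⟨u, hu, hxu⟩ := exists_side ht hx
    exact Set.mem_biUnion hu hxu
  have hinf : {x : V | x ≠ w}.Infinite := by
    have h1 := (Set.finite_singleton w).infinite_compl
    have h2 : ({w} : Set V)ᶜ = {x : V | x ≠ w} := by ext x; simp
    rwa [h2] at h1
  exact (hfin.subset hsub).not_infinite hinf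

/-- An infinite set contains points at arbitrarily large distance from `w`. -/
lemma exists_far (ht : T.IsTree) (hlf : ∀ v : V, (T.neighborSet v).Finite)
    {s : Set V} (hs : s.Infinite) (w : V) (A : ℕ) : ∃ x ∈ s, A < T.dist w x := by
  have hfin := ball_finite ht hlf w A
  obtain ⟨x, hxs, hxb⟩ := (hs.diff hfin).nonempty
  exact ⟨x, hxs, by simpa using hxb⟩

lemma not_bounded_of_infinite (ht : T.IsTree) (hlf : ∀ v : V, (T.neighborSet v).Finite)
    [Infinite V] : ¬ BoundedGraph T := by
  rintro ⟨D, hD⟩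
  obtain ⟨v₀⟩ := ht.isConnected.nonempty
  have : (Set.univ : Set V).Finite :=
    (ball_finite ht hlf v₀ D).subset fun x _ => hD v₀ x
  exact Set.infinite_univ this

end LocFin

section Iso

lemma iso_dist (ht : T.IsTree) (e : T ≃g T) (x y : V) :
    T.dist (e x) (e y) = T.dist x y := by
  have key : ∀ (f : T ≃g T) (a b : V), T.dist (f a) (f b) ≤ T.dist a b := by
    intro f a b
    obtain ⟨p, hpl⟩ := ht.isConnected.exists_walk_length_eq_dist a b
    have := SimpleGraph.dist_le (p.map f.toHom)
    rwa [Walk.length_map, hpl] at this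
  refine le_antisymm (key e x y) ?_
  have := key e.symm (e x) (e y)
  simpa using this

lemma iso_mem_side (ht : T.IsTree) (e : T ≃g T) {w u x : V} :
    x ∈ side T w u ↔ e x ∈ side T (e w) (e u) := by
  simp only [side, Set.mem_setOf_eq, iso_dist ht e]

lemma iso_side_infinite (ht : T.IsTree) (e : T ≃g T) {w u : V}
    (h : (side T w u).Infinite) : (side T (e w) (e u)).Infinite := by
  have himg : e '' side T w u ⊆ side T (e w) (e u) := by
    rintro y ⟨x, hx, rfl⟩
    exact (iso_mem_side ht e).mp hx
  exact (Set.Infinite.image (fun a _ b _ hab => e.injective hab) h).mono himg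

lemma iso_branch (ht : T.IsTree) (e : T ≃g T) {w : V} (h : BranchVertex T w) :
    BranchVertex T (e w) := by
  rw [branchVertex_iff ht] at h ⊢
  obtain ⟨u₁, u₂, u₃, h12, h13, h23, hu1, hu2, hu3, hi1, hi2, hi3⟩ := h
  exact ⟨e u₁, e u₂, e u₃,
    fun hh => h12 (e.injective hh), fun hh => h13 (e.injective hh),
    fun hh => h23 (e.injective hh),
    e.map_adj_iff.mpr hu1, e.map_adj_iff.mpr hu2, e.map_adj_iff.mpr hu3,
    iso_side_infinite ht e hi1, iso_side_infinite ht e hi2, iso_side_infinite ht e hi3⟩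

end Iso

/-- If some branch vertex exists and the action is cocompact, the tree is bushy. -/
lemma bushy_of_branch (ht : T.IsTree) {H : Type*} [Group H] (φ : H →* (T ≃g T))
    {s : Finset V} (hs : ∀ v : V, ∃ u ∈ s, ∃ h : H, φ h u = v)
    {w₀ : V} (hw₀ : BranchVertex T w₀) : Bushy T := by
  classical
  refine ⟨s.sup fun u => T.dist u w₀, fun v => ?_⟩
  obtain ⟨u, hu, h, rfl⟩ := hs v
  refine ⟨φ h w₀, ?_, iso_branch ht (φ h) hw₀⟩
  rw [iso_dist ht (φ h)]
  exact Finset.le_sup (f := fun u => T.dist u w₀) hu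

/-- A line-like tree has no branch vertex. -/
lemma no_branch_of_lineLike (ht : T.IsTree) (hlf : ∀ v : V, (T.neighborSet v).Finite)
    (hl : LineLike T) {w : V} (hw : BranchVertex T w) : False := by
  obtain ⟨L, hgeo, A, hA⟩ := hl
  rw [branchVertex_iff ht] at hw
  obtain ⟨u₁, u₂, u₃, h12, h13, h23, hu1, hu2, hu3, hi1, hi2, hi3⟩ := hw
  -- for each infinite side, find a line point deep inside it
  have key : ∀ u : V, T.Adj w u → (side T w u).Infinite →
      ∃ n : ℤ, L n ∈ side T w u ∧ 1 ≤ T.dist w (L n) := by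
    intro u hu hinf
    obtain ⟨x, hxs, hxd⟩ := exists_far ht hlf hinf w A
    obtain ⟨n, hn⟩ := hA x
    have hLn : L n ∈ side T w u := by
      by_contra hc
      have hc' : L n ∈ side T u w := (side_compl ht hu).mpr hc
      have := dist_add_of_sides ht hu.symm hxs hc'
      have hxw : T.dist x w = T.dist w x := SimpleGraph.dist_comm
      omega
    refine ⟨n, hLn, ?_⟩
    have htri : T.dist w x ≤ T.dist w (L n) + T.dist (L n) x := ht.isConnected.dist_triangle
    have hxL : T.dist (L n) x = T.dist x (L n) := SimpleGraph.dist_comm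
    omega
  obtain ⟨n₁, hn1, hd1⟩ := key u₁ hu1 hi1
  obtain ⟨n₂, hn2, hd2⟩ := key u₂ hu2 hi2
  obtain ⟨n₃, hn3, hd3⟩ := key u₃ hu3 hi3
  -- pairwise distance additivity
  have pair : ∀ (ua ub : V) (na nb : ℤ), ua ≠ ub → T.Adj w ua → T.Adj w ub →
      L na ∈ side T w ua → L nb ∈ side T w ub →
      T.dist (L na) (L nb) = T.dist w (L na) + T.dist w (L nb) := by
    intro ua ub na nb hne hua hub ha hb
    have hb' : L nb ∈ side T ua w := by
      by_contra hc
      have : L nb ∈ side T w ua := by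
        by_contra hc2
        exact hc ((side_compl ht hua).mpr hc2)
      exact hne (side_eq_of_mem ht hua hub this hb)
    have := dist_add_of_sides ht hua.symm ha hb'
    have hcomm : T.dist (L na) w = T.dist w (L na) := SimpleGraph.dist_comm
    omega
  have e12 := pair u₁ u₂ n₁ n₂ h12 hu1 hu2 hn1 hn2
  have e13 := pair u₁ u₃ n₁ n₃ h13 hu1 hu3 hn1 hn3
  have e23 := pair u₂ u₃ n₂ n₃ h23 hu2 hu3 hn2 hn3
  rw [hgeo] at e12 e13 e23
  omega

/-- With a cocompact action on an infinite locally finite tree, some vertex has two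
distinct neighbours with infinite sides. -/
lemma exists_double (ht : T.IsTree) (hlf : ∀ v : V, (T.neighborSet v).Finite) [Infinite V]
    {H : Type*} [Group H] (φ : H →* (T ≃g T))
    {s : Finset V} (hs : ∀ v : V, ∃ u ∈ s, ∃ h : H, φ h u = v) :
    ∃ w a b : V, a ≠ b ∧ T.Adj w a ∧ T.Adj w b ∧
      (side T w a).Infinite ∧ (side T w b).Infinite := by
  classical
  by_contra hc
  push_neg at hc
  have hfex : ∀ w : V, ∃ u, T.Adj w u ∧ (side T w u).Infinite :=
    fun w => exists_infinite_side ht hlf w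
  let f : V → V := fun w => (hfex w).choose
  have hfadj : ∀ w, T.Adj w (f w) := fun w => (hfex w).choose_spec.1
  have hfinf : ∀ w, (side T w (f w)).Infinite := fun w => (hfex w).choose_spec.2
  have huniq : ∀ w u, T.Adj w u → (side T w u).Infinite → u = f w := by
    intro w u hu hinf
    by_contra hne
    exact hfinf w (hc w u (f w) hne hu (hfadj w) hinf)
  set F : V → Set V := fun w => (side T w (f w))ᶜ with hF
  have hFeq : ∀ w, F w = side T (f w) w := by
    intro w
    ext x
    simp only [hF, Set.mem_compl_iff]
    exact (side_compl ht (hfadj w)).symm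
  have hFfin : ∀ w, (F w).Finite := by
    intro w
    have hsub : F w ⊆ {w} ∪ ⋃ u ∈ {u | T.Adj w u ∧ u ≠ f w}, side T w u := by
      intro x hx
      by_cases hxw : x = w
      · exact Or.inl (by simp [hxw])
      · obtain ⟨u, hu, hxu⟩ := exists_side ht hxw
        have hune : u ≠ f w := by
          rintro rfl
          exact hx hxu
        exact Or.inr (Set.mem_biUnion ⟨hu, hune⟩ hxu)
    refine Set.Finite.subset (Set.Finite.union (Set.finite_singleton w) ?_) hsub
    refine Set.Finite.biUnion ((hlf w).subset fun u hu => hu.1) ?_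
    intro u hu
    by_contra hinf
    exact hu.2 (huniq w u hu.1 hinf)
  -- strict growth of the finite part along f
  have hgrow : ∀ w, (F w).ncard < (F (f w)).ncard := by
    intro w
    have hffw : f (f w) ≠ w := by
      intro heq
      have h1 : (side T (f w) (f (f w))).Infinite := hfinf (f w)
      rw [heq, ← hFeq w] at h1
      exact h1 (hFfin w)
    have hnest : side T (f w) (f (f w)) ⊆ side T w (f w) :=
      side_nested ht (hfadj w) (hfadj (f w)) hffw
    have hsub : F w ⊆ F (f w) := fun x hx hmem => hx (hnest hmem)
    have hmemnew : f w ∈ F (f w) := not_mem_side_self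
    have hmemold : f w ∉ F w := fun hx => hx (self_mem_side ht (hfadj w))
    exact Set.ncard_lt_ncard ⟨hsub, fun hss => hmemold (hss hmemnew)⟩ (hFfin (f w))
  -- invariance of the finite part's cardinality
  have hinv : ∀ (h : H) (w : V), (F (φ h w)).ncard = (F w).ncard := by
    intro h w
    set e := φ h
    have hfe : f (e w) = e (f w) := by
      symm
      apply huniq
      · exact e.map_adj_iff.mpr (hfadj w)
      · exact iso_side_infinite ht e (hfinf w)
    have hFim : F (e w) = e '' F w := by
      ext y
      simp only [hF, Set.mem_compl_iff, hfe]
      constructor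
      · intro hy
        refine ⟨e.symm y, fun hmem => hy ?_, by simp⟩
        have := (iso_mem_side ht e (w := w) (u := f w) (x := e.symm y)).mp hmem
        simpa using this
      · rintro ⟨x, hx, rfl⟩ hmem
        exact hx ((iso_mem_side ht e).mpr hmem)
    rw [hFim, Set.ncard_image_of_injective _ e.injective]
  -- iteration and boundedness contradiction
  obtain ⟨v₀⟩ := ht.isConnected.nonempty
  set M := s.sup fun u => (F u).ncard with hM
  have hbound : ∀ v : V, (F v).ncard ≤ M := by
    intro v
    obtain ⟨u, hu, h, rfl⟩ := hs v
    rw [hinv h u]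
    exact Finset.le_sup (f := fun u => (F u).ncard) hu
  have hiter : ∀ n : ℕ, n ≤ (F (f^[n] v₀)).ncard := by
    intro n
    induction n with
    | zero => omega
    | succ n ih =>
      have := hgrow (f^[n] v₀)
      rw [Function.iterate_succ_apply']
      omega
  have := hiter (M + 1)
  have := hbound (f^[M + 1] v₀)
  omega

section Ray

open Classical in
/-- next step of the ray: a neighbour of `u` other than `w` with infinite side. -/
noncomputable def nxt (T : SimpleGraph V) (w u : V) : V :=
  if h : ∃ z, T.Adj u z ∧ z ≠ w ∧ (side T u z).Infinite then h.choose else u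

lemma nxt_spec (ht : T.IsTree) (hlf : ∀ v : V, (T.neighborSet v).Finite)
    {w u : V} (hwu : T.Adj w u) (hinf : (side T w u).Infinite) :
    T.Adj u (nxt T w u) ∧ nxt T w u ≠ w ∧ (side T u (nxt T w u)).Infinite := by
  classical
  have hex : ∃ z, T.Adj u z ∧ z ≠ w ∧ (side T u z).Infinite := by
    by_contra hc
    push_neg at hc
    have hsub : side T w u ⊆ (⋃ z ∈ {z | T.Adj u z ∧ z ≠ w}, side T u z) ∪ {u} := by
      intro x hx
      by_cases hxu : x = u
      · exact Or.inr (by simp [hxu])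
      · obtain ⟨z, hz, hxz⟩ := exists_side ht hxu
        have hzw : z ≠ w := by
          rintro rfl
          exact ((side_compl ht hwu.symm).mp hx) hxz
        exact Or.inl (Set.mem_biUnion ⟨hz, hzw⟩ hxz)
    have hfin : (⋃ z ∈ {z | T.Adj u z ∧ z ≠ w}, side T u z).Finite := by
      refine Set.Finite.biUnion ((hlf u).subset fun z hz => hz.1) ?_
      intro z hz
      by_contra hzin
      exact hzin (hc z hz.1 hz.2)
    exact ((hfin.union (Set.finite_singleton u)).subset hsub).not_infinite hinf
  rw [nxt, dif_pos hex]
  exact hex.choose_spec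

/-- the forward ray from `w` in direction `a` (as pairs of consecutive vertices). -/
noncomputable def rayAux (T : SimpleGraph V) (w a : V) : ℕ → V × V :=
  fun n => Nat.rec (w, a) (fun _ p => (p.2, nxt T p.1 p.2)) n

noncomputable def ray (T : SimpleGraph V) (w a : V) (n : ℕ) : V := (rayAux T w a n).1

lemma rayAux_succ (T : SimpleGraph V) (w a : V) (n : ℕ) :
    rayAux T w a (n+1) = ((rayAux T w a n).2, nxt T (rayAux T w a n).1 (rayAux T w a n).2) :=
  rfl

lemma ray_zero (T : SimpleGraph V) (w a : V) : ray T w a 0 = w := rfl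
lemma ray_one (T : SimpleGraph V) (w a : V) : ray T w a 1 = a := rfl
lemma ray_succ_eq (T : SimpleGraph V) (w a : V) (n : ℕ) :
    ray T w a (n+1) = (rayAux T w a n).2 := by
  rw [ray, rayAux_succ]
lemma ray_succ_succ (T : SimpleGraph V) (w a : V) (n : ℕ) :
    ray T w a (n+2) = nxt T (ray T w a n) (ray T w a (n+1)) := by
  rw [ray_succ_eq, rayAux_succ, ray_succ_eq, ray]

lemma ray_prop (ht : T.IsTree) (hlf : ∀ v : V, (T.neighborSet v).Finite)
    {w a : V} (hwa : T.Adj w a) (hinf : (side T w a).Infinite) (n : ℕ) :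
    T.Adj (ray T w a n) (ray T w a (n+1)) ∧
      (side T (ray T w a n) (ray T w a (n+1))).Infinite := by
  induction n with
  | zero => exact ⟨hwa, hinf⟩
  | succ n ih =>
    obtain ⟨hadj, hne, hinf'⟩ := nxt_spec ht hlf ih.1 ih.2
    rw [← ray_succ_succ] at hadj hinf'
    exact ⟨hadj, hinf'⟩

lemma ray_ne (ht : T.IsTree) (hlf : ∀ v : V, (T.neighborSet v).Finite)
    {w a : V} (hwa : T.Adj w a) (hinf : (side T w a).Infinite) (n : ℕ) :
    ray T w a (n+2) ≠ ray T w a n := by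
  obtain ⟨hadj, hinf'⟩ := ray_prop ht hlf hwa hinf n
  obtain ⟨_, hne, _⟩ := nxt_spec ht hlf hadj hinf'
  rw [← ray_succ_succ] at hne
  exact hne

/-- bi-infinite line through `w` in directions `a` and `b`. -/
noncomputable def lineF (T : SimpleGraph V) (w a b : V) (n : ℤ) : V :=
  if 0 ≤ n then ray T w a n.toNat else ray T w b (-n).toNat

lemma lineF_ofNat (T : SimpleGraph V) (w a b : V) (k : ℕ) :
    lineF T w a b (k : ℤ) = ray T w a k := by
  rw [lineF, if_pos (by omega : (0:ℤ) ≤ (k:ℤ))]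
  norm_num

lemma lineF_neg (T : SimpleGraph V) (w a b : V) (k : ℕ) (hk : 1 ≤ k) :
    lineF T w a b (-(k : ℤ)) = ray T w b k := by
  rw [lineF, if_neg (by omega)]
  congr 1
  omega

lemma lineF_adj (ht : T.IsTree) (hlf : ∀ v : V, (T.neighborSet v).Finite)
    {w a b : V} (hwa : T.Adj w a) (hwb : T.Adj w b)
    (hia : (side T w a).Infinite) (hib : (side T w b).Infinite) (n : ℤ) :
    T.Adj (lineF T w a b n) (lineF T w a b (n+1)) := by
  rcases le_or_gt 0 n with hn | hn
  · obtain ⟨k, rfl⟩ : ∃ k : ℕ, n = (k : ℤ) := ⟨n.toNat, by omega⟩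
    have h1 : ((k : ℤ) + 1) = ((k+1 : ℕ) : ℤ) := by push_cast; ring
    rw [h1, lineF_ofNat, lineF_ofNat]
    exact (ray_prop ht hlf hwa hia k).1
  · obtain ⟨k, hk, rfl⟩ : ∃ k : ℕ, 1 ≤ k ∧ n = -((k : ℤ)) := ⟨(-n).toNat, by omega, by omega⟩
    rcases Nat.eq_or_lt_of_le hk with hk1 | hk2
    · rw [← hk1]
      have h1 : (-(1:ℤ) + 1) = ((0:ℕ) : ℤ) := by norm_num
      rw [show -((1:ℕ):ℤ) + 1 = ((0:ℕ):ℤ) by norm_num, lineF_ofNat, lineF_neg T w a b 1 le_rfl]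
      rw [ray_zero, ray_one]
      exact hwb.symm
    · obtain ⟨m, hm, rfl⟩ : ∃ m : ℕ, 1 ≤ m ∧ k = m + 1 := ⟨k - 1, by omega, by omega⟩
      have h1 : (-((m+1:ℕ):ℤ) + 1) = -((m:ℕ):ℤ) := by push_cast; ring
      rw [h1, lineF_neg T w a b (m+1) (by omega), lineF_neg T w a b m hm]
      exact ((ray_prop ht hlf hwb hib m).1).symm

lemma lineF_nb (ht : T.IsTree) (hlf : ∀ v : V, (T.neighborSet v).Finite)
    {w a b : V} (hwa : T.Adj w a) (hwb : T.Adj w b) (hab : a ≠ b)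
    (hia : (side T w a).Infinite) (hib : (side T w b).Infinite) (n : ℤ) :
    lineF T w a b (n+1) ≠ lineF T w a b (n-1) := by
  rcases lt_trichotomy n 0 with hn | hn | hn
  · obtain ⟨k, hk, rfl⟩ : ∃ k : ℕ, 1 ≤ k ∧ n = -((k : ℤ)) := ⟨(-n).toNat, by omega, by omega⟩
    have h2 : (-((k:ℕ):ℤ) - 1) = -((k+1:ℕ):ℤ) := by push_cast; ring
    rw [h2, lineF_neg T w a b (k+1) (by omega)]
    rcases Nat.eq_or_lt_of_le hk with hk1 | hk2
    · rw [← hk1]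
      rw [show -((1:ℕ):ℤ) + 1 = ((0:ℕ):ℤ) by norm_num, lineF_ofNat, ray_zero]
      intro hcon
      have := ray_ne ht hlf hwb hib 0
      rw [ray_zero] at this
      exact this hcon.symm
    · obtain ⟨m, hm, rfl⟩ : ∃ m : ℕ, 1 ≤ m ∧ k = m + 1 := ⟨k - 1, by omega, by omega⟩
      have h1 : (-((m+1:ℕ):ℤ) + 1) = -((m:ℕ):ℤ) := by push_cast; ring
      rw [h1, lineF_neg T w a b m hm]
      intro hcon
      exact ray_ne ht hlf hwb hib m hcon.symm
  · subst hn
    rw [show ((0:ℤ)+1) = ((1:ℕ):ℤ) by norm_num, show ((0:ℤ)-1) = -((1:ℕ):ℤ) by norm_num,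
      lineF_ofNat, lineF_neg T w a b 1 le_rfl, ray_one, ray_one]
    exact hab
  · obtain ⟨k, hk, rfl⟩ : ∃ k : ℕ, 1 ≤ k ∧ n = ((k : ℤ)) := ⟨n.toNat, by omega, by omega⟩
    rw [show ((k:ℕ):ℤ)+1 = ((k+1:ℕ):ℤ) by push_cast; ring,
      show ((k:ℕ):ℤ)-1 = ((k-1:ℕ):ℤ) by push_cast [Nat.cast_sub hk]; ring,
      lineF_ofNat, lineF_ofNat]
    have := ray_ne ht hlf hwa hia (k-1)
    rwa [show k-1+2 = k+1 by omega] at this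

end Ray

section Chain

variable {c : ℤ → V}

lemma chain_mem_side (ht : T.IsTree) (hadj : ∀ n : ℤ, T.Adj (c n) (c (n+1)))
    (hnb : ∀ n : ℤ, c (n+1) ≠ c (n-1)) :
    ∀ (k : ℕ) (n : ℤ), 1 ≤ k → c (n + k) ∈ side T (c n) (c (n+1)) := by
  intro k
  induction k with
  | zero => omega
  | succ k ih =>
    intro n _
    rcases Nat.eq_zero_or_pos k with hk0 | hk1
    · subst hk0
      have e : n + ((1:ℕ) : ℤ) = n + 1 := by push_cast; ring
      rw [e]
      exact self_mem_side ht (hadj n)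
    · have e : n + ((k+1 : ℕ) : ℤ) = (n + 1) + (k : ℕ) := by push_cast; ring
      rw [e]
      have hmem := ih (n+1) hk1
      have hne : c (n + 1 + 1) ≠ c n := by
        have := hnb (n+1)
        rwa [show n + 1 - 1 = n by ring] at this
      exact side_nested ht (hadj n) (hadj (n+1)) hne hmem

lemma chain_dist (ht : T.IsTree) (hadj : ∀ n : ℤ, T.Adj (c n) (c (n+1)))
    (hnb : ∀ n : ℤ, c (n+1) ≠ c (n-1)) :
    ∀ (k : ℕ) (n : ℤ), T.dist (c n) (c (n + k)) = k := by
  intro k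
  induction k with
  | zero => intro n; simp [SimpleGraph.dist_self]
  | succ k ih =>
    intro n
    have hmem := chain_mem_side ht hadj hnb (k+1) n (by omega)
    rw [mem_side_iff ht (hadj n).symm] at hmem
    have hIH := ih (n+1)
    have e : n + 1 + (k : ℕ) = n + ((k+1 : ℕ) : ℤ) := by push_cast; ring
    rw [e] at hIH
    have c1 : T.dist (c (n + ((k+1:ℕ):ℤ))) (c (n+1)) = T.dist (c (n+1)) (c (n + ((k+1:ℕ):ℤ))) :=
      SimpleGraph.dist_comm
    have c2 : T.dist (c (n + ((k+1:ℕ):ℤ))) (c n) = T.dist (c n) (c (n + ((k+1:ℕ):ℤ))) :=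
      SimpleGraph.dist_comm
    omega

lemma chain_side_mono (ht : T.IsTree) (hadj : ∀ n : ℤ, T.Adj (c n) (c (n+1)))
    (hnb : ∀ n : ℤ, c (n+1) ≠ c (n-1)) :
    ∀ (k : ℕ) (n : ℤ), side T (c (n + k)) (c (n + k + 1)) ⊆ side T (c n) (c (n+1)) := by
  intro k
  induction k with
  | zero =>
    intro n
    have e : n + ((0:ℕ):ℤ) = n := by push_cast; ring
    rw [e]
  | succ k ih =>
    intro n
    have e : n + ((k+1 : ℕ) : ℤ) = (n + k) + 1 := by push_cast; ring
    rw [e]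
    refine subset_trans ?_ (ih n)
    have hne : c ((n + (k:ℕ)) + 1 + 1) ≠ c (n + (k:ℕ)) := by
      have := hnb (n + (k:ℕ) + 1)
      rwa [show n + (k:ℕ) + 1 - 1 = n + (k:ℕ) by ring] at this
    exact side_nested ht (hadj (n + k)) (hadj (n + k + 1)) hne

end Chain

section LineMain

variable {w a b : V}

lemma lineF_dist (ht : T.IsTree) (hlf : ∀ v : V, (T.neighborSet v).Finite)
    (hwa : T.Adj w a) (hwb : T.Adj w b) (hab : a ≠ b)
    (hia : (side T w a).Infinite) (hib : (side T w b).Infinite) (m n : ℤ) :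
    T.dist (lineF T w a b m) (lineF T w a b n) = (m - n).natAbs := by
  set L := lineF T w a b with hL
  have hadj : ∀ k : ℤ, T.Adj (L k) (L (k+1)) := lineF_adj ht hlf hwa hwb hia hib
  have hnb : ∀ k : ℤ, L (k+1) ≠ L (k-1) := lineF_nb ht hlf hwa hwb hab hia hib
  rcases le_total n m with hnm | hnm
  · have e : m = n + ((m - n).toNat : ℤ) := by omega
    have hthis := chain_dist ht hadj hnb (m-n).toNat n
    rw [← e] at hthis
    have hcomm : T.dist (L m) (L n) = T.dist (L n) (L m) := SimpleGraph.dist_comm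
    rw [hcomm, hthis]
    omega
  · have e : n = m + ((n - m).toNat : ℤ) := by omega
    have := chain_dist ht hadj hnb (n-m).toNat m
    rw [← e] at this
    rw [this]
    omega

lemma lineF_side_fwd (ht : T.IsTree) (hlf : ∀ v : V, (T.neighborSet v).Finite)
    (hwa : T.Adj w a) (hwb : T.Adj w b) (hab : a ≠ b)
    (hia : (side T w a).Infinite) (hib : (side T w b).Infinite) (n : ℤ) :
    (side T (lineF T w a b n) (lineF T w a b (n+1))).Infinite := by
  set L := lineF T w a b with hL
  have hadj : ∀ k : ℤ, T.Adj (L k) (L (k+1)) := lineF_adj ht hlf hwa hwb hia hib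
  have hnb : ∀ k : ℤ, L (k+1) ≠ L (k-1) := lineF_nb ht hlf hwa hwb hab hia hib
  set M : ℤ := max n 0 with hM
  have hM0 : 0 ≤ M := le_max_right n 0
  have hsub := chain_side_mono ht hadj hnb (M - n).toNat n
  have e : n + ((M-n).toNat : ℤ) = M := by omega
  rw [e] at hsub
  refine Set.Infinite.mono hsub ?_
  have e1 : L M = ray T w a M.toNat := by
    have h' := lineF_ofNat T w a b M.toNat
    rwa [show ((M.toNat : ℕ) : ℤ) = M by omega, ← hL] at h'
  have e2 : L (M + 1) = ray T w a (M.toNat + 1) := by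
    have h' := lineF_ofNat T w a b (M.toNat + 1)
    rwa [show ((M.toNat + 1 : ℕ) : ℤ) = M + 1 by omega, ← hL] at h' 
  rw [e1, e2]
  exact (ray_prop ht hlf hwa hia M.toNat).2

lemma lineF_side_bwd (ht : T.IsTree) (hlf : ∀ v : V, (T.neighborSet v).Finite)
    (hwa : T.Adj w a) (hwb : T.Adj w b) (hab : a ≠ b)
    (hia : (side T w a).Infinite) (hib : (side T w b).Infinite) (n : ℤ) :
    (side T (lineF T w a b n) (lineF T w a b (n-1))).Infinite := by
  set L := lineF T w a b with hL
  have hadjL : ∀ k : ℤ, T.Adj (L k) (L (k+1)) := lineF_adj ht hlf hwa hwb hia hib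
  have hnbL : ∀ k : ℤ, L (k+1) ≠ L (k-1) := lineF_nb ht hlf hwa hwb hab hia hib
  set c : ℤ → V := fun m => L (-m) with hc
  have hadj : ∀ m : ℤ, T.Adj (c m) (c (m+1)) := by
    intro m
    have := (hadjL (-m-1)).symm
    rw [show -m-1+1 = -m by ring] at this
    rw [hc]
    simpa [show -(m+1) = -m-1 by ring] using this
  have hnb : ∀ m : ℤ, c (m+1) ≠ c (m-1) := by
    intro m
    have := (hnbL (-m)).symm
    rw [hc]
    simpa [show -(m+1) = -m-1 by ring, show -(m-1) = -m+1 by ring] using this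
  set M : ℤ := max (-n) 1 with hM
  have hM1 : 1 ≤ M := le_max_right _ _
  have hsub := chain_side_mono ht hadj hnb (M + n).toNat (-n)
  have e : -n + ((M+n).toNat : ℤ) = M := by omega
  rw [e] at hsub
  have g1 : c (-n) = L n := by
    show L (-(-n)) = L n
    rw [neg_neg]
  have g2 : c (-n + 1) = L (n - 1) := by
    show L (-(-n + 1)) = L (n - 1)
    rw [show -(-n+1) = n - 1 by ring]
  rw [← g1, ← g2]
  refine Set.Infinite.mono hsub ?_
  have e1 : c M = ray T w b M.toNat := by
    show L (-M) = ray T w b M.toNat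
    have h' := lineF_neg T w a b M.toNat (by omega)
    rwa [show -((M.toNat : ℕ) : ℤ) = -M by omega, ← hL] at h'
  have e2 : c (M + 1) = ray T w b (M.toNat + 1) := by
    show L (-(M+1)) = ray T w b (M.toNat + 1)
    have h' := lineF_neg T w a b (M.toNat + 1) (by omega)
    rwa [show -(((M.toNat + 1) : ℕ) : ℤ) = -(M+1) by omega, ← hL] at h' 
  rw [e1, e2]
  exact (ray_prop ht hlf hwb hib M.toNat).2

/-- In a tree with no branch vertices, any vertex with two infinite sides lies on the line. -/
lemma core_mem_range (ht : T.IsTree) (hlf : ∀ v : V, (T.neighborSet v).Finite)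
    (hwa : T.Adj w a) (hwb : T.Adj w b) (hab : a ≠ b)
    (hia : (side T w a).Infinite) (hib : (side T w b).Infinite)
    (hnobr : ∀ v : V, ¬ BranchVertex T v)
    {x z₁ z₂ : V} (hz : z₁ ≠ z₂) (h1 : T.Adj x z₁) (h2 : T.Adj x z₂)
    (hi1 : (side T x z₁).Infinite) (hi2 : (side T x z₂).Infinite) :
    ∃ n : ℤ, lineF T w a b n = x := by
  set L := lineF T w a b with hL
  by_contra hc
  push_neg at hc
  have hSne : (Set.range fun n : ℤ => T.dist x (L n)).Nonempty := ⟨_, 0, rfl⟩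
  set k := sInf (Set.range fun n : ℤ => T.dist x (L n)) with hk
  obtain ⟨n₀, hn₀'⟩ := Nat.sInf_mem hSne
  have hn₀ : T.dist x (L n₀) = k := by rw [hk]; exact hn₀'
  have hmin : ∀ n : ℤ, k ≤ T.dist x (L n) := fun n => Nat.sInf_le ⟨n, rfl⟩
  have hk1 : 1 ≤ k := by
    rcases Nat.eq_zero_or_pos k with h0 | h'
    · exfalso
      rw [h0] at hn₀
      exact hc n₀ (eq_of_dist_eq_zero ht hn₀).symm
    · exact h'
  -- step from p = L n₀ toward x
  obtain ⟨u, hu, hud⟩ := exists_step ht (show T.dist x (L n₀) = (k-1) + 1 by omega)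
  have hune1 : u ≠ L (n₀ + 1) := by
    rintro rfl
    have := hmin (n₀ + 1)
    omega
  have hune2 : u ≠ L (n₀ - 1) := by
    rintro rfl
    have := hmin (n₀ - 1)
    omega
  have hadjL : ∀ j : ℤ, T.Adj (L j) (L (j+1)) := lineF_adj ht hlf hwa hwb hia hib
  have hnbL : ∀ j : ℤ, L (j+1) ≠ L (j-1) := lineF_nb ht hlf hwa hwb hab hia hib
  -- the side of p toward u is infinite
  have hpx : L n₀ ≠ x := fun h => hc n₀ h
  obtain ⟨q, hq, hpq⟩ := exists_side ht hpx
  obtain ⟨z, hzadj, hzinf, hzq⟩ : ∃ z, T.Adj x z ∧ (side T x z).Infinite ∧ z ≠ q := by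
    by_cases hq1 : z₁ = q
    · exact ⟨z₂, h2, hi2, by rw [← hq1]; exact hz.symm⟩
    · exact ⟨z₁, h1, hi1, hq1⟩
  have hpz : L n₀ ∈ side T z x := by
    rw [side_compl ht hzadj]
    intro hmem
    exact hzq (side_eq_of_mem ht hzadj hq hmem hpq).symm.symm
  have hsubs : side T x z ⊆ side T (L n₀) u := by
    intro y hy
    have hyp := dist_add_of_sides ht hzadj.symm hy hpz
    have htri : T.dist y u ≤ T.dist y x + T.dist x u := ht.isConnected.dist_triangle
    simp only [side, Set.mem_setOf_eq]
    have hxu : T.dist x u = k - 1 := hud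
    have hxp : T.dist x (L n₀) = k := hn₀
    omega
  have hiu : (side T (L n₀) u).Infinite := hzinf.mono hsubs
  -- p is then a branch vertex
  apply hnobr (L n₀)
  rw [branchVertex_iff ht]
  refine ⟨u, L (n₀ + 1), L (n₀ - 1), hune1, hune2, ?_, hu, hadjL n₀, ?_, hiu, ?_, ?_⟩
  · have := hnbL n₀
    exact this
  · have := (hadjL (n₀ - 1)).symm
    rwa [show n₀ - 1 + 1 = n₀ by ring] at this
  · exact lineF_side_fwd ht hlf hwa hwb hab hia hib n₀
  · exact lineF_side_bwd ht hlf hwa hwb hab hia hib n₀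

end LineMain

lemma linelike_of_noBranch (ht : T.IsTree) (hlf : ∀ v : V, (T.neighborSet v).Finite)
    [Infinite V] {H : Type*} [Group H] (φ : H →* (T ≃g T))
    {s : Finset V} (hs : ∀ v : V, ∃ u ∈ s, ∃ h : H, φ h u = v)
    (hnobr : ∀ v : V, ¬ BranchVertex T v) : LineLike T := by
  classical
  obtain ⟨w, a, b, hab, hwa, hwb, hia, hib⟩ := exists_double ht hlf φ hs
  refine ⟨lineF T w a b, lineF_dist ht hlf hwa hwb hab hia hib,
    s.sup (fun u => T.dist u w), ?_⟩
  intro v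
  obtain ⟨u, hu, h, rfl⟩ := hs v
  have hcore : ∃ n : ℤ, lineF T w a b n = φ h w := by
    refine core_mem_range ht hlf hwa hwb hab hia hib hnobr
      (x := φ h w) (z₁ := φ h a) (z₂ := φ h b) ?_ ?_ ?_ ?_ ?_
    · exact fun he => hab ((φ h).injective he)
    · exact (φ h).map_adj_iff.mpr hwa
    · exact (φ h).map_adj_iff.mpr hwb
    · exact iso_side_infinite ht (φ h) hia
    · exact iso_side_infinite ht (φ h) hib
  obtain ⟨n, hn⟩ := hcore
  refine ⟨n, ?_⟩
  rw [hn, iso_dist ht (φ h)]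
  exact Finset.le_sup (f := fun u => T.dist u w) hu

end Statement11Aux

theorem statement11 {V : Type*} (T : SimpleGraph V)
    (htree : T.IsTree) (hlf : ∀ v : V, (T.neighborSet v).Finite)
    (H : Type*) [Group H] (φ : H →* (T ≃g T))
    (horbits : ∃ s : Finset V, ∀ v : V, ∃ u ∈ s, ∃ h : H, φ h u = v) :
    (BoundedGraph T ∧ ¬ LineLike T ∧ ¬ Bushy T) ∨
    (¬ BoundedGraph T ∧ LineLike T ∧ ¬ Bushy T) ∨
    (¬ BoundedGraph T ∧ ¬ LineLike T ∧ Bushy T) := by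
  classical
  obtain ⟨s, hs⟩ := horbits
  obtain ⟨v₀⟩ := htree.isConnected.nonempty
  cases finite_or_infinite V with
  | inl hfin =>
    left
    refine ⟨?_, ?_, ?_⟩
    · haveI := Fintype.ofFinite V
      refine ⟨Finset.univ.sup (fun u => Finset.univ.sup (fun v => T.dist u v)), fun u v => ?_⟩
      calc T.dist u v ≤ Finset.univ.sup (fun v => T.dist u v) :=
            Finset.le_sup (Finset.mem_univ v)
        _ ≤ _ := Finset.le_sup (f := fun u => Finset.univ.sup (fun v => T.dist u v))
            (Finset.mem_univ u)
    · rintro ⟨L, hgeo, -⟩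
      have hinj : Function.Injective L := by
        intro m n hmn
        have h' := hgeo m n
        rw [hmn, SimpleGraph.dist_self] at h'
        omega
      haveI := hfin
      haveI : Finite ℤ := Finite.of_injective L hinj
      exact not_finite ℤ
    · rintro ⟨A, hB⟩
      obtain ⟨w', hd, c₁, c₂, c₃, -, -, -, hi1, -, -⟩ := hB v₀
      exact hi1 (Set.toFinite _)
  | inr hinf =>
    by_cases hbr : ∃ v, BranchVertex T v
    · right; right
      obtain ⟨w', hw'⟩ := hbr
      refine ⟨Statement11Aux.not_bounded_of_infinite htree hlf, ?_,
        Statement11Aux.bushy_of_branch htree φ hs hw'⟩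
      intro hl
      exact Statement11Aux.no_branch_of_lineLike htree hlf hl hw'
    · right; left
      push_neg at hbr
      refine ⟨Statement11Aux.not_bounded_of_infinite htree hlf,
        Statement11Aux.linelike_of_noBranch htree hlf φ hs hbr, ?_⟩
      rintro ⟨A, hB⟩
      obtain ⟨w', -, hw'⟩ := hB v₀
      exact hbr w' hw'
end

section
/- Let T be an infinite, bounded valence, bushy, thornless tree such that Aut(T) has finitely many orbits of vertices. Then Aut(T), with the topology of pointwise convergence on vertices, has no nontrivial compact normal subgroup. -/
/-- The topology of pointwise convergence on vertices on the automorphism group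
of a graph (vertices being discrete). -/
def autTopology {V : Type*} (G : SimpleGraph V) : TopologicalSpace (G ≃g G) :=
  TopologicalSpace.induced (fun f : G ≃g G => (f : V → V))
    (@Pi.topologicalSpace V (fun _ => V) (fun _ => ⊥))

/-- A graph is thornless if no vertex has degree 1. -/
def Thornless {V : Type*} (G : SimpleGraph V) : Prop :=
  ∀ v : V, (G.neighborSet v).ncard ≠ 1


open SimpleGraph

section AuxProof

variable {V : Type*} {T : SimpleGraph V}

private lemma aux_path_len (ht : T.IsTree) {u v : V} {p : T.Walk u v} (hp : p.IsPath) :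
    p.length = T.dist u v := by
  classical
  obtain ⟨q, hq⟩ := ht.isConnected.exists_walk_length_eq_dist u v
  have h1 : p = q.bypass := (ht.existsUnique_path u v).unique hp q.bypass_isPath
  have h2 := SimpleGraph.Walk.length_bypass_le q
  have h3 := SimpleGraph.dist_le p
  have h4 : p.length = q.bypass.length := by rw [h1]
  omega

private lemma aux_getVert_dist (ht : T.IsTree) {u v w : V} {p : T.Walk u v} (hp : p.IsPath)
    (hw : w ∈ p.support) : p.getVert (T.dist u w) = w ∧ T.dist u w ≤ p.length := by
  classical
  have hq : (p.takeUntil w hw).IsPath := hp.takeUntil hw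
  have hlen : (p.takeUntil w hw).length = T.dist u w := aux_path_len ht hq
  have hspec := p.take_spec hw
  have hlen2 : (p.takeUntil w hw).length + (p.dropUntil w hw).length = p.length := by
    have := congrArg SimpleGraph.Walk.length hspec
    rwa [SimpleGraph.Walk.length_append] at this
  constructor
  · have h5 := congrArg (fun q : T.Walk u v => q.getVert (T.dist u w)) hspec
    simp only [SimpleGraph.Walk.getVert_append, hlen] at h5
    rw [if_neg (lt_irrefl _), Nat.sub_self, SimpleGraph.Walk.getVert_zero] at h5
    exact h5.symm
  · omega

private lemma aux_adj_getVert_one (ht : T.IsTree) {x y w : V} {p : T.Walk x y} (hp : p.IsPath)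
    (hadj : T.Adj x w) (hw : w ∈ p.support) : w = p.getVert 1 := by
  have hd : T.dist x w = 1 := SimpleGraph.dist_eq_one_iff_adj.mpr hadj
  have h := (aux_getVert_dist ht hp hw).1
  rw [hd] at h
  exact h.symm

private lemma aux_iso_dist (hconn : T.Connected) (g : T ≃g T) (u v : V) :
    T.dist (g u) (g v) = T.dist u v := by
  have key : ∀ (h : T ≃g T) (a b : V), T.dist (h a) (h b) ≤ T.dist a b := by
    intro h a b
    obtain ⟨p, hp⟩ := hconn.exists_walk_length_eq_dist a b
    calc T.dist (h a) (h b) ≤ (p.map h.toHom).length := SimpleGraph.dist_le _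
      _ = p.length := SimpleGraph.Walk.length_map _ _
      _ = T.dist a b := hp
  refine le_antisymm (key g u v) ?_
  have h := key g.symm (g u) (g v)
  simpa using h

private lemma aux_reach_induce {w : V} : ∀ {a b : V} (q : T.Walk a b), w ∉ q.support →
    ∀ (ha : a ≠ w) (hb : b ≠ w),
    (T.induce {u : V | u ≠ w}).Reachable ⟨a, ha⟩ ⟨b, hb⟩ := by
  intro a b q
  induction q with
  | nil => intro _ ha hb; rfl
  | cons h q' ih =>
    intro hq ha hb
    have hq' : w ∉ q'.support := by
      intro hmem
      exact hq (by rw [SimpleGraph.Walk.support_cons]; exact List.mem_cons_of_mem _ hmem)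
    have hmid : _ ≠ w := fun he => hq' (he ▸ q'.start_mem_support)
    have hadj : (T.induce {u : V | u ≠ w}).Adj ⟨_, ha⟩ ⟨_, hmid⟩ := h
    exact hadj.reachable.trans (ih hq' hmid hb)

private lemma aux_branch_three (ht : T.IsTree) {w : V} (hb : BranchVertex T w) :
    ∃ y₁ y₂ y₃ : V, y₁ ≠ y₂ ∧ y₁ ≠ y₃ ∧ y₂ ≠ y₃ ∧ T.Adj w y₁ ∧ T.Adj w y₂ ∧ T.Adj w y₃ := by
  obtain ⟨c₁, c₂, c₃, h12, h13, h23, hi1, hi2, hi3⟩ := hb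
  have key : ∀ c : (T.induce {u : V | u ≠ w}).ConnectedComponent, c.supp.Infinite →
      ∃ (y : V) (hy : T.Adj w y),
        (T.induce {u : V | u ≠ w}).connectedComponentMk ⟨y, hy.ne'⟩ = c := by
    intro c hc
    obtain ⟨u, hu⟩ := hc.nonempty
    have huw : (u : V) ≠ w := u.2
    obtain ⟨p, hp, -⟩ := ht.existsUnique_path w u
    obtain ⟨y, hadj, q, rfl⟩ := SimpleGraph.Walk.exists_eq_cons_of_ne (Ne.symm huw) p
    rw [SimpleGraph.Walk.cons_isPath_iff] at hp
    refine ⟨y, hadj, ?_⟩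
    have hr := aux_reach_induce q hp.2 hadj.ne' u.2
    rw [SimpleGraph.ConnectedComponent.mem_supp_iff] at hu
    rw [← hu]
    exact SimpleGraph.ConnectedComponent.sound (by convert hr using 2)
  obtain ⟨y₁, hy1, hk1⟩ := key c₁ hi1
  obtain ⟨y₂, hy2, hk2⟩ := key c₂ hi2
  obtain ⟨y₃, hy3, hk3⟩ := key c₃ hi3
  refine ⟨y₁, y₂, y₃, ?_, ?_, ?_, hy1, hy2, hy3⟩
  · intro he; apply h12; rw [← hk1, ← hk2]; congr 1; exact Subtype.ext he
  · intro he; apply h13; rw [← hk1, ← hk3]; congr 1; exact Subtype.ext he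
  · intro he; apply h23; rw [← hk2, ← hk3]; congr 1; exact Subtype.ext he


private lemma aux_orbit_finite {N : Subgroup (T ≃g T)}
    (hc : @IsCompact _ (autTopology T) (N : Set (T ≃g T))) (v : V) :
    ((fun n : T ≃g T => n v) '' (N : Set (T ≃g T))).Finite := by
  letI tV : TopologicalSpace V := ⊥
  haveI : DiscreteTopology V := ⟨rfl⟩
  letI : TopologicalSpace (T ≃g T) := autTopology T
  have hcont : Continuous fun n : T ≃g T => n v :=
    (continuous_apply v).comp (continuous_induced_dom (t := @Pi.topologicalSpace V (fun _ => V) (fun _ => ⊥)))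
  have h2 := hc.image hcont
  exact h2.finite_of_discrete

private lemma aux_disp_bound (ht : T.IsTree) {N : Subgroup (T ≃g T)} (hN : N.Normal)
    (hfin : ∀ v : V, ((fun n : T ≃g T => n v) '' (N : Set (T ≃g T))).Finite)
    (horbits : ∃ s : Finset V, ∀ v : V, ∃ u ∈ s, ∃ g : T ≃g T, g u = v) :
    ∃ K : ℕ, ∀ n ∈ N, ∀ v : V, T.dist v (n v) ≤ K := by
  obtain ⟨s, hs⟩ := horbits
  have hKu : ∀ u : V, ∃ K : ℕ, ∀ m ∈ N, T.dist u (m u) ≤ K := by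
    intro u
    have hf : ((fun z => T.dist u z) '' ((fun n : T ≃g T => n u) '' (N : Set (T ≃g T)))).Finite :=
      (hfin u).image _
    obtain ⟨K, hK⟩ := hf.bddAbove
    exact ⟨K, fun m hm => hK ⟨_, ⟨m, hm, rfl⟩, rfl⟩⟩
  choose Kf hKf using hKu
  refine ⟨s.sup Kf, fun n hn v => ?_⟩
  obtain ⟨u, hu, g, hgu⟩ := hs v
  have hm : g⁻¹ * n * g ∈ N := by
    have h := hN.conj_mem n hn g⁻¹
    simpa using h
  have key : (n : T ≃g T) v = g ((g⁻¹ * n * g) u) := by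
    rw [← hgu]
    simp [RelIso.mul_apply]
  calc T.dist v (n v) = T.dist (g u) (g ((g⁻¹ * n * g) u)) := by rw [← key, hgu]
    _ = T.dist u ((g⁻¹ * n * g) u) := aux_iso_dist ht.isConnected g _ _
    _ ≤ Kf u := hKf u _ hm
    _ ≤ s.sup Kf := Finset.le_sup hu

private lemma aux_step (ht : T.IsTree) (hbv : BoundedValence T) (hth : Thornless T)
    (n : T ≃g T) (D : ℕ) (hD : 1 ≤ D) (hmax : ∀ v : V, T.dist v (n v) ≤ D)
    (pth : ∀ y : V, T.Walk y (n y)) (hpth : ∀ y, (pth y).IsPath)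
    {x : V} (hx : T.dist x (n x) = D) :
    ∃ c : V, T.Adj x c ∧ c ≠ (pth x).getVert 1 ∧ T.dist c (n c) = D ∧
      (pth c).getVert 1 = x ∧ ∀ z, T.Adj x z → z = (pth x).getVert 1 ∨ z = c := by
  classical
  set p : T.Walk x (n x) := pth x with hpdef
  have hp : p.IsPath := hpth x
  have plen : p.length = D := (aux_path_len ht hp).trans hx
  set a : V := p.getVert 1 with hadef
  set b : V := p.getVert (D - 1) with hbdef
  have ha_adj : T.Adj x a := by
    have h := p.adj_getVert_succ (i := 0) (by omega)
    rwa [p.getVert_zero] at h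
  have hxnx : x ≠ n x := by
    intro h
    rw [← h] at hx
    rw [SimpleGraph.dist_self] at hx
    omega
  have CAND : ∀ z, T.Adj x z → z ≠ a → n z = b := by
    intro z hz hza
    by_contra hnz
    have hzmem : z ∉ p.support := fun hmem => hza (aux_adj_getVert_one ht hp hz hmem)
    have hmap : T.Adj (n x) (n z) := n.map_rel_iff.mpr hz
    have hznw : z ≠ n z := by
      intro he
      have hz_nx : T.Adj z (n x) := by
        rw [← he] at hmap
        exact hmap.symm
      have hq2 : (SimpleGraph.Walk.cons hz (SimpleGraph.Walk.cons hz_nx SimpleGraph.Walk.nil)).IsPath := by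
        simp [SimpleGraph.Walk.isPath_def, hz.ne, hxnx, hz_nx.ne]
      have hpe := (ht.existsUnique_path x (n x)).unique hp hq2
      apply hza
      rw [hadef, hpdef] at *
      rw [hpe]
      rfl
    have hnzmem : n z ∉ p.support := by
      intro hmem
      have hmem' : n z ∈ p.reverse.support := by
        rw [SimpleGraph.Walk.support_reverse]
        simpa using hmem
      have h := aux_adj_getVert_one ht ((SimpleGraph.Walk.isPath_reverse_iff p).mpr hp) hmap hmem'
      rw [SimpleGraph.Walk.getVert_reverse, plen] at h
      exact hnz h
    have hconcat : (p.concat hmap).IsPath := by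
      rw [← SimpleGraph.Walk.isPath_reverse_iff, SimpleGraph.Walk.reverse_concat,
        SimpleGraph.Walk.cons_isPath_iff]
      refine ⟨(SimpleGraph.Walk.isPath_reverse_iff p).mpr hp, ?_⟩
      rw [SimpleGraph.Walk.support_reverse]
      simpa using hnzmem
    have hbig : (SimpleGraph.Walk.cons hz.symm (p.concat hmap)).IsPath := by
      rw [SimpleGraph.Walk.cons_isPath_iff]
      refine ⟨hconcat, ?_⟩
      rw [SimpleGraph.Walk.support_concat]
      intro hmem
      rcases List.mem_append.mp hmem with h | h
      · exact hzmem h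
      · exact hznw (List.mem_singleton.mp h)
    have hlen2 : (SimpleGraph.Walk.cons hz.symm (p.concat hmap)).length = D + 2 := by
      rw [SimpleGraph.Walk.length_cons, SimpleGraph.Walk.length_concat, plen]
    have h3 := aux_path_len ht hbig
    have h4 := hmax z
    omega
  obtain ⟨C, hC⟩ := hbv
  have hcard := hth x
  have hex : ∃ c, T.Adj x c ∧ c ≠ a := by
    by_contra h
    push_neg at h
    have hset : T.neighborSet x = {a} :=
      Set.eq_singleton_iff_unique_mem.mpr ⟨ha_adj, fun z hz => h z hz⟩
    exact hcard (by rw [hset, Set.ncard_singleton])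
  obtain ⟨c, hc, hca⟩ := hex
  have hnc : (n : T ≃g T) c = b := CAND c hc hca
  have huniq : ∀ z, T.Adj x z → z = a ∨ z = c := by
    intro z hz
    by_cases hza : z = a
    · exact Or.inl hza
    · exact Or.inr (n.injective ((CAND z hz hza).trans hnc.symm))
  have hbmem : b ∈ p.support :=
    SimpleGraph.Walk.mem_support_iff_exists_getVert.mpr ⟨D - 1, rfl, by omega⟩
  have htk : (p.takeUntil b hbmem).IsPath := hp.takeUntil hbmem
  have hcmem : c ∉ (p.takeUntil b hbmem).support := by
    intro hmem
    exact hca (aux_adj_getVert_one ht hp hc (p.support_takeUntil_subset hbmem hmem))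
  have hq0 : (SimpleGraph.Walk.cons hc.symm (p.takeUntil b hbmem)).IsPath :=
    (SimpleGraph.Walk.cons_isPath_iff _ _).mpr ⟨htk, hcmem⟩
  have hb_adj : T.Adj b (n x) := by
    have h := p.adj_getVert_succ (i := D - 1) (by omega)
    have hD' : D - 1 + 1 = D := by omega
    rw [hD'] at h
    have hgl : p.getVert D = n x := by rw [← plen]; exact p.getVert_length
    rwa [hgl] at h
  have hdrop : (p.dropUntil b hbmem).length = 1 := by
    have hdp : (p.dropUntil b hbmem).IsPath := hp.dropUntil hbmem
    have h := aux_path_len ht hdp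
    rwa [SimpleGraph.dist_eq_one_iff_adj.mpr hb_adj] at h
  have hsum : (p.takeUntil b hbmem).length + (p.dropUntil b hbmem).length = D := by
    have h := congrArg SimpleGraph.Walk.length (p.take_spec hbmem)
    rw [SimpleGraph.Walk.length_append] at h
    rw [h, plen]
  have htklen : (p.takeUntil b hbmem).length = D - 1 := by omega
  let q : T.Walk c (n c) := (SimpleGraph.Walk.cons hc.symm (p.takeUntil b hbmem)).copy rfl hnc.symm
  have hq : q.IsPath := (SimpleGraph.Walk.isPath_copy _ _ _).mpr hq0
  have hqlen : q.length = D := by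
    show ((SimpleGraph.Walk.cons hc.symm (p.takeUntil b hbmem)).copy rfl hnc.symm).length = D
    rw [SimpleGraph.Walk.length_copy, SimpleGraph.Walk.length_cons, htklen]
    omega
  have hdistc : T.dist c (n c) = D := by
    rw [← aux_path_len ht hq]
    exact hqlen
  have hpthc : pth c = q := (ht.existsUnique_path c (n c)).unique (hpth c) hq
  have hgv : (pth c).getVert 1 = x := by
    rw [hpthc]
    show ((SimpleGraph.Walk.cons hc.symm (p.takeUntil b hbmem)).copy rfl hnc.symm).getVert 1 = x
    rw [SimpleGraph.Walk.getVert_copy, SimpleGraph.Walk.getVert_cons_succ (n := 0),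
      SimpleGraph.Walk.getVert_zero]
  exact ⟨c, hc, hca, hdistc, hgv, huniq⟩
end AuxProof

theorem statement13 {V : Type*} [Infinite V] (T : SimpleGraph V)
    (htree : T.IsTree) (hbv : BoundedValence T) (hbushy : Bushy T)
    (hthornless : Thornless T)
    (horbits : ∃ s : Finset V, ∀ v : V, ∃ u ∈ s, ∃ g : T ≃g T, g u = v) :
    ∀ N : Subgroup (T ≃g T), N.Normal →
      @IsCompact (T ≃g T) (autTopology T) (N : Set (T ≃g T)) → N = ⊥ := by
  classical
  intro N hN hcompact
  obtain ⟨A, hA⟩ := hbushy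
  rw [Subgroup.eq_bot_iff_forall]
  intro n hn
  have hfin : ∀ v : V, ((fun m : T ≃g T => m v) '' (N : Set (T ≃g T))).Finite :=
    fun v => aux_orbit_finite hcompact v
  obtain ⟨K, hK⟩ := aux_disp_bound htree hN hfin horbits
  by_contra hne
  have hvex : ∃ v : V, (n : T ≃g T) v ≠ v := by
    by_contra h
    push_neg at h
    exact hne (RelIso.ext h)
  obtain ⟨v₀, hv₀⟩ := hvex
  have hd₀ : 1 ≤ T.dist v₀ (n v₀) := htree.isConnected.pos_dist_of_ne (Ne.symm hv₀)
  set P : ℕ → Prop := fun d => ∃ v : V, T.dist v (n v) = d with hPdef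
  have hPd : P (T.dist v₀ (n v₀)) := ⟨v₀, rfl⟩
  set D := Nat.findGreatest P K with hDdef
  have hD1 : 1 ≤ D := le_trans hd₀ (Nat.le_findGreatest (hK n hn v₀) hPd)
  have hDspec : P D := Nat.findGreatest_spec (hK n hn v₀) hPd
  have hmax : ∀ v : V, T.dist v (n v) ≤ D := fun v =>
    Nat.le_findGreatest (hK n hn v) ⟨v, rfl⟩
  obtain ⟨x₀, hx₀⟩ := hDspec
  have pthE : ∀ y : V, ∃ p : T.Walk y (n y), p.IsPath :=
    fun y => (htree.existsUnique_path y (n y)).exists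
  choose pth hpth using pthE
  have hstep : ∀ y : {y : V // T.dist y (n y) = D},
      ∃ c : {y : V // T.dist y (n y) = D}, T.Adj (y : V) c ∧ (c : V) ≠ (pth y).getVert 1 ∧
        (pth (c : V)).getVert 1 = y ∧ ∀ z, T.Adj (y : V) z → z = (pth (y : V)).getVert 1 ∨ z = c := by
    rintro ⟨y, hy⟩
    obtain ⟨c, h1, h2, h3, h4, h5⟩ := aux_step htree hbv hthornless n D hD1 hmax pth hpth hy
    exact ⟨⟨c, h3⟩, h1, h2, h4, h5⟩
  choose nxt hadj hne' hprev hnbr using hstep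
  set f : ℕ → {y : V // T.dist y (n y) = D} := fun k => nxt^[k] ⟨x₀, hx₀⟩ with hfdef
  have hfs : ∀ k, f (k + 1) = nxt (f k) := fun k => Function.iterate_succ_apply' nxt k _
  have hnbr' : ∀ k z, T.Adj (↑(f (k+1))) z → z = ↑(f k) ∨ z = ↑(f (k+2)) := by
    intro k z hz
    have h1 : (pth ↑(f (k+1))).getVert 1 = ↑(f k) := by
      rw [hfs k]; exact hprev (f k)
    have h2 := hnbr (f (k+1)) z hz
    rw [h1] at h2
    rcases h2 with h | h
    · exact Or.inl h
    · right; rw [hfs (k+1)]; exact h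
  set M := A + 1 with hMdef
  have hball : ∀ (u e : V) (q : T.Walk u e), e = ↑(f M) → q.length ≤ A →
      ∃ i, u = ↑(f i) ∧ M ≤ i + q.length := by
    intro u e q
    induction q with
    | nil => intro he _; exact ⟨M, he, by omega⟩
    | cons h q' ih =>
      intro he hlen
      rw [SimpleGraph.Walk.length_cons] at hlen
      obtain ⟨i, hieq, hi⟩ := ih he (by omega)
      have hige : 2 ≤ i := by omega
      obtain ⟨j, rfl⟩ : ∃ j, i = j + 1 := ⟨i - 1, by omega⟩
      rw [hieq] at h
      rcases hnbr' j _ h.symm with h1 | h1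
      · exact ⟨j, h1, by rw [SimpleGraph.Walk.length_cons]; omega⟩
      · exact ⟨j + 2, h1, by rw [SimpleGraph.Walk.length_cons]; omega⟩
  obtain ⟨w, hwd, hwb⟩ := hA ↑(f M)
  obtain ⟨p, hp⟩ := htree.isConnected.exists_walk_length_eq_dist w ↑(f M)
  have hplen : p.length ≤ A := by
    rw [hp, SimpleGraph.dist_comm]
    exact hwd
  obtain ⟨i, hweq, hi⟩ := hball w _ p rfl hplen
  obtain ⟨j, rfl⟩ : ∃ j, i = j + 1 := ⟨i - 1, by omega⟩
  obtain ⟨y₁, y₂, y₃, h12, h13, h23, hy1, hy2, hy3⟩ := aux_branch_three htree hwb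
  have hz : ∀ y, T.Adj w y → y = ↑(f j) ∨ y = ↑(f (j+2)) := by
    intro y hy
    apply hnbr' j
    rwa [← hweq]
  rcases hz y₁ hy1 with e1 | e1 <;> rcases hz y₂ hy2 with e2 | e2 <;>
    rcases hz y₃ hy3 with e3 | e3 <;>
    first
      | exact h12 (e1.trans e2.symm)
      | exact h13 (e1.trans e3.symm)
      | exact h23 (e2.trans e3.symm)
end
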